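/- arXiv:2007.14829 — 5 statements merged into one kernel-verified Lean document; each statement's English description precedes it below -/
import Mathlib

section
/- Assume k = 2m − 2 (i.e., s = 2) and m ≥ 3. For distinct indices i, j ∈ {1,…,m} and a nonzero vector P ∈ L_i, the subspace span((⋃_{r ∉ {i,j}} L_r) ∪ {P}) intersects L_j in a one-dimensional subspace; this defines a map f_{i,j} from the projective points of L_i to the projective points of L_j by f_{i,j}(⟨P⟩) = span((⋃_{r ∉ {i,j}} L_r) ∪ {P}) ∩ L_j, and one sets f_{i,i} = id. Then: (1) f_{j,ℓ} ∘ f_{i,j} = f_{i,ℓ} for all i, j, ℓ ∈ {1,…,m}; and (2) each f_{i,j} is a bijection between the q+1 projective points of L_i and the q+1 projective points of L_j. -/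
open scoped Classical
noncomputable section

variable {F : Type} [Field F]

/-- Projective points of `F^k`. -/
abbrev Pt (F : Type) [Field F] (k : ℕ) := Projectivization F (Fin k → F)

/-!
The `2m = k + 2` vectors `P i, Q i` have a `2`-dimensional space `R` of linear relations
`∑ r, c_r ρ = 0`, where `c_r ρ ∈ L r` (`lineComponent`) collects the terms of `ρ` on `P r, Q r`.
Each `c_r` maps `R` isomorphically onto `L r`, since a relation vanishing on `L r` involves
only `k` vectors, which are independent. For `ρ ∈ R`, `c_j ρ = -c_i ρ - ∑_{r ≠ i, j} c_r ρ`
lies in `⟨L r : r ≠ i, j⟩ + ⟨c_i ρ⟩`, and a dimension count shows that this space meets `L j`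
in a line; hence `f i j ⟨c_i ρ⟩ = ⟨c_j ρ⟩`. Thus every `f i j` is induced by `c_j ∘ c_i⁻¹`,
which gives the cocycle identity and bijectivity.
-/

open Module Submodule
open scoped LinearAlgebra.Projectivization

namespace Projectivization

variable {K V : Type*} [Field K] [AddCommGroup V] [Module K V]

theorem range_map_subtype (W : Submodule K V) :
    Set.range (map W.subtype W.injective_subtype) = {x | x.submodule ≤ W} := by
  ext x
  constructor
  · rintro ⟨y, rfl⟩
    induction y using ind with
    | h w hw =>
      rw [Set.mem_ofPred_eq, map_mk, submodule_mk, span_singleton_le_iff_mem]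
      exact w.2
  · intro hx
    have hrep : x.rep ∈ W := hx (x.submodule_eq ▸ mem_span_singleton_self _)
    refine ⟨mk K ⟨x.rep, hrep⟩ fun h => x.rep_nonzero (congrArg Subtype.val h), ?_⟩
    rw [map_mk]
    exact x.mk_rep

theorem natCard_setOf_submodule_le (W : Submodule K V) :
    Nat.card {x : ℙ K V // x.submodule ≤ W} = Nat.card (ℙ K W) := by
  rw [← Set.coe_ofPred, ← range_map_subtype, Nat.card_range_of_injective (map_injective _ _)]

end Projectivization

def LinearGeneralPosition (K : Type*) {V α : Type*} [Field K] [AddCommGroup V] [Module K V]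
    (v : α → V) : Prop :=
  ∀ T : Finset α, T.card ≤ finrank K V → LinearIndepOn K v (T : Set α)

namespace LinearGeneralPosition

variable {K V ι : Type*} [Field K] [AddCommGroup V] [Module K V]
  {P Q : ι → V} (h : LinearGeneralPosition K (Sum.elim P Q))
include h

theorem finrank_iSup_span_pair {S : Finset ι} (hS : 2 * S.card ≤ finrank K V) :
    finrank K ↥(⨆ r ∈ S, span K {P r, Q r}) = 2 * S.card := by
  have hspan : ⨆ r ∈ S, span K {P r, Q r} = span K (Sum.elim P Q '' ↑(S.disjSum S)) := by
    rw [← span_iUnion₂ (fun r (_ : r ∈ S) => ({P r, Q r} : Set V))]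
    congr 1
    ext v
    simp [Finset.mem_disjSum, and_or_left, exists_or, eq_comm]
  have hT : (S.disjSum S).card ≤ finrank K V := by rw [Finset.card_disjSum]; omega
  rw [hspan, Set.image_eq_range, finrank_span_eq_card (h _ hT)]
  simp [two_mul]

theorem finrank_span_pair (hV : 2 ≤ finrank K V) (i : ι) :
    finrank K ↥(span K {P i, Q i}) = 2 := by
  have hi := h.finrank_iSup_span_pair (S := {i}) (by rwa [Finset.card_singleton])
  rwa [Finset.iSup_singleton, Finset.card_singleton] at hi

variable [FiniteDimensional K V]

theorem iSup_span_pair_inf_eq_bot {S T : Finset ι} (hST : Disjoint S T)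
    (hcard : 2 * (S.card + T.card) ≤ finrank K V) :
    (⨆ r ∈ S, span K {P r, Q r}) ⊓ (⨆ r ∈ T, span K {P r, Q r}) = ⊥ := by
  have hsum := finrank_sup_add_finrank_inf_eq (⨆ r ∈ S, span K {P r, Q r})
    (⨆ r ∈ T, span K {P r, Q r})
  rw [← Finset.iSup_union, h.finrank_iSup_span_pair (by rwa [Finset.card_union_of_disjoint hST]),
    h.finrank_iSup_span_pair (by omega), h.finrank_iSup_span_pair (by omega),
    Finset.card_union_of_disjoint hST] at hsum
  exact finrank_eq_zero.mp (by omega)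

theorem iSup_span_pair_eq_top {S : Finset ι} (hS : 2 * S.card = finrank K V) :
    ⨆ r ∈ S, span K {P r, Q r} = ⊤ :=
  eq_top_of_finrank_eq (by rw [h.finrank_iSup_span_pair hS.le, hS])

theorem finrank_sup_inf_span_pair [Fintype ι] (hcard : finrank K V + 2 = 2 * Fintype.card ι)
    {i j : ι} (hij : i ≠ j) {X : Submodule K V} (hX : X ≤ span K {P i, Q i}) :
    finrank K ↥(((⨆ r ∈ {r | r ≠ i ∧ r ≠ j}, span K {P r, Q r}) ⊔ X) ⊓ span K {P j, Q j}) =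
      finrank K X := by
  set S : Finset ι := {i, j}ᶜ
  have hS : S.card + 2 = Fintype.card ι := by
    rw [← Finset.card_pair hij, Finset.card_compl_add_card]
  have hA : ⨆ r ∈ {r | r ≠ i ∧ r ≠ j}, span K {P r, Q r} = ⨆ r ∈ S, span K {P r, Q r} := by
    simp [S]
  rw [hA]
  set A := ⨆ r ∈ S, span K {P r, Q r}
  have hAX : A ⊓ X = ⊥ := by
    refine eq_bot_iff.2 ((inf_le_inf_left A hX).trans (le_of_eq ?_))
    rw [← Finset.iSup_singleton i (fun r => span K {P r, Q r})]
    exact h.iSup_span_pair_inf_eq_bot (by simp [S]) (by rw [Finset.card_singleton]; omega)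
  have hAj : A ⊔ span K {P j, Q j} = ⊤ := by
    rw [← Finset.iSup_singleton j (fun r => span K {P r, Q r}), ← Finset.iSup_union]
    exact h.iSup_span_pair_eq_top
      (by rw [Finset.card_union_of_disjoint (by simp [S]), Finset.card_singleton]; omega)
  have hAX_sum := finrank_sup_add_finrank_inf_eq A X
  have hmeet_sum := finrank_sup_add_finrank_inf_eq (A ⊔ X) (span K {P j, Q j})
  rw [hAX, finrank_bot, h.finrank_iSup_span_pair (by omega)] at hAX_sum
  rw [sup_right_comm, hAj, top_sup_eq, finrank_top, h.finrank_span_pair (by omega)] at hmeet_sum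
  omega

end LinearGeneralPosition

section Relations

variable (K : Type*) {V α ι : Type*} [Field K] [AddCommGroup V] [Module K V] [Fintype α]

def linearRelations (v : α → V) : Submodule K (α → K) :=
  LinearMap.ker (Fintype.linearCombination K v)

theorem card_le_finrank_add_finrank_linearRelations [FiniteDimensional K V] (v : α → V) :
    Fintype.card α ≤ finrank K V + finrank K (linearRelations K v) := by
  have hrank := LinearMap.finrank_range_add_finrank_ker (Fintype.linearCombination K v)
  rw [finrank_fintype_fun_eq_card] at hrank
  have hrange := Submodule.finrank_le (LinearMap.range (Fintype.linearCombination K v))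
  rw [linearRelations]
  omega

variable {K}

def lineComponent (P Q : ι → V) (r : ι) : (ι ⊕ ι → K) →ₗ[K] V :=
  (LinearMap.proj (Sum.inl r)).smulRight (P r) + (LinearMap.proj (Sum.inr r)).smulRight (Q r)

variable {P Q : ι → V}

theorem lineComponent_apply (r : ι) (ρ : ι ⊕ ι → K) :
    lineComponent P Q r ρ = ρ (Sum.inl r) • P r + ρ (Sum.inr r) • Q r :=
  rfl

theorem lineComponent_mem_span (r : ι) (ρ : ι ⊕ ι → K) :
    lineComponent P Q r ρ ∈ span K {P r, Q r} :=
  add_mem (smul_mem _ _ (subset_span (by simp))) (smul_mem _ _ (subset_span (by simp)))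

theorem sum_lineComponent [Fintype ι] (ρ : ι ⊕ ι → K) :
    ∑ r, lineComponent P Q r ρ = Fintype.linearCombination K (Sum.elim P Q) ρ := by
  simp [lineComponent_apply, Fintype.linearCombination_apply, Fintype.sum_sum_type,
    Finset.sum_add_distrib]

theorem lineComponent_mem_sup_inf [Fintype ι] {ρ : ι ⊕ ι → K}
    (hρ : ρ ∈ linearRelations K (Sum.elim P Q)) {i j : ι} (hij : i ≠ j) :
    lineComponent P Q j ρ ∈ ((⨆ r ∈ {r | r ≠ i ∧ r ≠ j}, span K {P r, Q r}) ⊔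
      span K {lineComponent P Q i ρ}) ⊓ span K {P j, Q j} := by
  refine mem_inf.2 ⟨?_, lineComponent_mem_span j ρ⟩
  have hsplit := Finset.sum_add_sum_compl {i, j} fun r => lineComponent P Q r ρ
  rw [Finset.sum_pair hij, sum_lineComponent, LinearMap.mem_ker.1 hρ] at hsplit
  have hj : lineComponent P Q j ρ =
      -lineComponent P Q i ρ - ∑ r ∈ ({i, j} : Finset ι)ᶜ, lineComponent P Q r ρ := by
    linear_combination (norm := module) hsplit
  rw [hj]
  refine sub_mem (neg_mem (mem_sup_right (mem_span_singleton_self _)))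
    (mem_sup_left (sum_mem fun r hr => ?_))
  exact mem_iSup_of_mem r
    (mem_iSup_of_mem (by simpa [not_or] using hr) (lineComponent_mem_span r ρ))

end Relations

namespace LinearGeneralPosition

variable {K V ι : Type*} [Field K] [AddCommGroup V] [Module K V] [Fintype ι]
  {P Q : ι → V} (h : LinearGeneralPosition K (Sum.elim P Q))
include h

theorem eq_zero_of_lineComponent_eq_zero (hV : 2 ≤ finrank K V)
    (hcard : 2 * Fintype.card ι ≤ finrank K V + 2) {ρ : ι ⊕ ι → K}
    (hρ : ρ ∈ linearRelations K (Sum.elim P Q)) {r : ι} (hr : lineComponent P Q r ρ = 0) :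
    ρ = 0 := by
  set B : Finset (ι ⊕ ι) := {Sum.inl r, Sum.inr r}
  have hB : B.card = 2 := Finset.card_pair Sum.inl_ne_inr
  have hρB : ∀ t ∈ B, ρ t = 0 := by
    refine linearIndepOn_finset_iff.mp (h B (by omega)) ρ ?_
    rwa [Finset.sum_pair Sum.inl_ne_inr]
  have hρBc : ∀ t ∈ Bᶜ, ρ t = 0 := by
    refine linearIndepOn_finset_iff.mp (h Bᶜ ?_) ρ ?_
    · rw [Finset.card_compl, Fintype.card_sum, hB]
      omega
    · have hsplit := Finset.sum_add_sum_compl B fun t => ρ t • Sum.elim P Q t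
      rwa [Finset.sum_eq_zero fun t ht => by rw [hρB t ht, zero_smul], zero_add,
        ← Fintype.linearCombination_apply, LinearMap.mem_ker.1 hρ] at hsplit
  funext t
  by_cases ht : t ∈ B
  · exact hρB t ht
  · exact hρBc t (Finset.mem_compl.2 ht)

variable [FiniteDimensional K V]

theorem exists_mem_linearRelations_lineComponent_eq (hV : 2 ≤ finrank K V)
    (hcard : finrank K V + 2 = 2 * Fintype.card ι) {r : ι} {w : V}
    (hw : w ∈ span K {P r, Q r}) :
    ∃ ρ ∈ linearRelations K (Sum.elim P Q), lineComponent P Q r ρ = w := by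
  let g : linearRelations K (Sum.elim P Q) →ₗ[K] span K {P r, Q r} :=
    ((lineComponent P Q r).comp (linearRelations K _).subtype).codRestrict _
      fun ρ => lineComponent_mem_span r (ρ : ι ⊕ ι → K)
  have hg : Function.Injective g := by
    rw [← LinearMap.ker_eq_bot, LinearMap.ker_eq_bot']
    exact fun ρ hρ =>
      Subtype.ext (h.eq_zero_of_lineComponent_eq_zero hV hcard.ge ρ.2 (congrArg Subtype.val hρ))
  have hrank : finrank K (linearRelations K (Sum.elim P Q)) = finrank K (span K {P r, Q r}) := by
    have hle := LinearMap.finrank_le_finrank_of_injective hg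
    have hge := card_le_finrank_add_finrank_linearRelations K (Sum.elim P Q)
    rw [Fintype.card_sum] at hge
    rw [h.finrank_span_pair hV] at hle ⊢
    omega
  obtain ⟨ρ, hρ⟩ := (LinearMap.injective_iff_surjective_of_finrank_eq_finrank hrank).mp hg ⟨w, hw⟩
  exact ⟨ρ, ρ.2, congrArg Subtype.val hρ⟩

theorem exists_mem_linearRelations_submodule_eq (hV : 2 ≤ finrank K V)
    (hcard : finrank K V + 2 = 2 * Fintype.card ι) {r : ι} {x : ℙ K V}
    (hx : x.submodule ≤ span K {P r, Q r}) :
    ∃ ρ ∈ linearRelations K (Sum.elim P Q),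
      ρ ≠ 0 ∧ x.submodule = span K {lineComponent P Q r ρ} := by
  obtain ⟨ρ, hρ, hρx⟩ := h.exists_mem_linearRelations_lineComponent_eq hV hcard
    (hx (x.submodule_eq ▸ mem_span_singleton_self x.rep))
  refine ⟨ρ, hρ, ?_, by rw [hρx, x.submodule_eq]⟩
  rintro rfl
  exact x.rep_nonzero (hρx.symm.trans (map_zero _))

theorem submodule_eq_span_lineComponent (hV : 2 ≤ finrank K V)
    (hcard : finrank K V + 2 = 2 * Fintype.card ι) {ρ : ι ⊕ ι → K}
    (hρ : ρ ∈ linearRelations K (Sum.elim P Q)) (hρ0 : ρ ≠ 0) {i j : ι} (hij : i ≠ j)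
    {x y : ℙ K V} (hx : x.submodule = span K {lineComponent P Q i ρ})
    (hy : y.submodule ≤ ((⨆ r ∈ {r | r ≠ i ∧ r ≠ j}, span K {P r, Q r}) ⊔ x.submodule) ⊓
      span K {P j, Q j}) :
    y.submodule = span K {lineComponent P Q j ρ} := by
  have hmeet := h.finrank_sup_inf_span_pair hcard hij
    (hx.trans_le ((span_singleton_le_iff_mem _ _).2 (lineComponent_mem_span i ρ)))
  rw [x.finrank_submodule] at hmeet
  have hcj : lineComponent P Q j ρ ≠ 0 :=
    fun hzero => hρ0 (h.eq_zero_of_lineComponent_eq_zero hV hcard.ge hρ hzero)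
  have hspan_le := (span_singleton_le_iff_mem _ _).2 (hx ▸ lineComponent_mem_sup_inf hρ hij)
  rw [eq_of_le_of_finrank_eq hy (by rw [y.finrank_submodule, hmeet]),
    eq_of_le_of_finrank_eq hspan_le (by rw [finrank_span_singleton hcj, hmeet])]

end LinearGeneralPosition

theorem statement3_general [Fintype F] {m k : ℕ} (hk : k + 2 = 2 * m) (hk4 : 4 ≤ k)
    (P Q : Fin m → (Fin k → F))
    (hgen : ∀ T : Finset (Fin m ⊕ Fin m), T.card ≤ k →
      LinearIndependent F (fun t : {x // x ∈ T} => Sum.elim P Q (t : Fin m ⊕ Fin m)))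
    (L : Fin m → Submodule F (Fin k → F))
    (hL : ∀ i, L i = Submodule.span F {P i, Q i})
    (f : ∀ i j : Fin m,
      {x : Pt F k // x.submodule ≤ L i} → {y : Pt F k // y.submodule ≤ L j})
    (hf : ∀ i j : Fin m, i ≠ j → ∀ x : {x : Pt F k // x.submodule ≤ L i},
      ((f i j x : Pt F k)).submodule ≤
        (⨆ r ∈ {r : Fin m | r ≠ i ∧ r ≠ j}, L r) ⊔ (x : Pt F k).submodule)
    (hfid : ∀ i (x : {x : Pt F k // x.submodule ≤ L i}), f i i x = x) :
    (∀ i, Nat.card {x : Pt F k // x.submodule ≤ L i} = Fintype.card F + 1) ∧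
    (∀ i j : Fin m, i ≠ j → ∀ x : {x : Pt F k // x.submodule ≤ L i},
      Module.finrank F
        ↥(((⨆ r ∈ {r : Fin m | r ≠ i ∧ r ≠ j}, L r) ⊔ (x : Pt F k).submodule) ⊓ L j) = 1) ∧
    (∀ i j ℓ : Fin m, ∀ x : {x : Pt F k // x.submodule ≤ L i},
      f j ℓ (f i j x) = f i ℓ x) ∧
    (∀ i j : Fin m, Function.Bijective (f i j)) := by
  obtain rfl : L = fun i => span F {P i, Q i} := funext hL
  have hpos : LinearGeneralPosition F (Sum.elim P Q) := fun T hT => hgen T (by simpa using hT)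
  have hcard : finrank F (Fin k → F) + 2 = 2 * Fintype.card (Fin m) := by simpa using hk
  have hV : 2 ≤ finrank F (Fin k → F) := by rw [Module.finrank_fin_fun]; omega
  have hf_eq : ∀ i j (x : {x : Pt F k // x.submodule ≤ span F {P i, Q i}}) ρ,
      ρ ∈ linearRelations F (Sum.elim P Q) → ρ ≠ 0 →
      (x : Pt F k).submodule = span F {lineComponent P Q i ρ} →
      (f i j x : Pt F k).submodule = span F {lineComponent P Q j ρ} := by
    intro i j x ρ hρ hρ0 hx
    rcases eq_or_ne i j with rfl | hij
    · rwa [hfid]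
    exact hpos.submodule_eq_span_lineComponent hV hcard hρ hρ0 hij hx
      (le_inf (hf i j hij x) (f i j x).2)
  have hcomp : ∀ i j ℓ x, f j ℓ (f i j x) = f i ℓ x := by
    intro i j ℓ x
    obtain ⟨ρ, hρ, hρ0, hx⟩ := hpos.exists_mem_linearRelations_submodule_eq hV hcard x.2
    exact Subtype.ext <| Projectivization.submodule_injective <|
      (hf_eq j ℓ _ ρ hρ hρ0 (hf_eq i j x ρ hρ hρ0 hx)).trans (hf_eq i ℓ x ρ hρ hρ0 hx).symm
  refine ⟨fun i => ?_, fun i j hij x => ?_, hcomp, fun i j => ?_⟩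
  · rw [Projectivization.natCard_setOf_submodule_le,
      Projectivization.card_of_finrank_two _ _ (hpos.finrank_span_pair hV i),
      Nat.card_eq_fintype_card]
  · rw [hpos.finrank_sup_inf_span_pair hcard hij x.2, Projectivization.finrank_submodule]
  · exact Function.bijective_iff_has_inverse.2 ⟨f j i, fun x => (hcomp i j i x).trans (hfid i x),
      fun y => (hcomp j i j y).trans (hfid j y)⟩

/-- for `k = 2m - 2` (`s = 2`) and the `m` generic lines `L i` spanned by
points `P i, Q i` of a rational normal curve (in linearly general position), for distinct
`i ≠ j` the span of the lines `L r` (`r ∉ {i,j}`) together with a point `x` of `L i` meets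
`L j` in a one-dimensional subspace; this defines maps `f i j` between the projective
points of the lines (with `f i i = id`).  Then each line carries `q + 1` projective points,
the defining intersection is one-dimensional, `f j ℓ ∘ f i j = f i ℓ`, and each `f i j`
is a bijection. -/
theorem statement3 [Fintype F] {m k : ℕ} (hm : 3 ≤ m) (hk : k + 2 = 2 * m) (hk4 : 4 ≤ k)
    (P Q : Fin m → (Fin k → F))
    (hgen : ∀ T : Finset (Fin m ⊕ Fin m), T.card ≤ k →
      LinearIndependent F (fun t : {x // x ∈ T} => Sum.elim P Q (t : Fin m ⊕ Fin m)))
    (L : Fin m → Submodule F (Fin k → F))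
    (hL : ∀ i, L i = Submodule.span F {P i, Q i})
    (f : ∀ i j : Fin m,
      {x : Pt F k // x.submodule ≤ L i} → {y : Pt F k // y.submodule ≤ L j})
    (hf : ∀ i j : Fin m, i ≠ j → ∀ x : {x : Pt F k // x.submodule ≤ L i},
      ((f i j x : Pt F k)).submodule ≤
        (⨆ r ∈ {r : Fin m | r ≠ i ∧ r ≠ j}, L r) ⊔ (x : Pt F k).submodule)
    (hfid : ∀ i (x : {x : Pt F k // x.submodule ≤ L i}), f i i x = x) :
    (∀ i, Nat.card {x : Pt F k // x.submodule ≤ L i} = Fintype.card F + 1) ∧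
    (∀ i j : Fin m, i ≠ j → ∀ x : {x : Pt F k // x.submodule ≤ L i},
      Module.finrank F
        ↥(((⨆ r ∈ {r : Fin m | r ≠ i ∧ r ≠ j}, L r) ⊔ (x : Pt F k).submodule) ⊓ L j) = 1) ∧
    (∀ i j ℓ : Fin m, ∀ x : {x : Pt F k // x.submodule ≤ L i},
      f j ℓ (f i j x) = f i ℓ x) ∧
    (∀ i j : Fin m, Function.Bijective (f i j)) :=
  statement3_general hk hk4 P Q hgen L hL f hf hfid
end
end

section
/- Suppose s ≥ 1 and Γ = Γ_1 ⊔ ⋯ ⊔ Γ_m is admissible with respect to (k_1,…,k_m) and global parameter s, where k = Σ_i k_i − s. Then every evaluation set S ⊆ Γ with |S| = k − 1 spans a (k−1)-dimensional subspace H of 𝔽_q^k (a hyperplane), and for every index j with |S ∩ Γ_j| < k_j one has Γ_j ⊄ H; consequently, for any sets C_j ⊇ Γ_j (the components), no component C_j with |S ∩ Γ_j| < k_j is contained in H. -/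
open scoped Classical
noncomputable section

variable {F : Type} [Field F]

/-- `Γ = Γ_1 ⊔ ⋯ ⊔ Γ_m` (given as finsets of vectors) is admissible with localities `kk`
in `F^K`: (1) each `Γ_i` spans a `kk i`-dimensional subspace and every subset of `Γ_i` of
size at most `kk i` is linearly independent; (2) every evaluation set `S ⊆ Γ`
(i.e. `|S ∩ Γ_i| ≤ kk i` for all `i`) with `|S| = K` spans `F^K`. -/
def AdmissibleSets {K m : ℕ} (Γ : Fin m → Finset (Fin K → F)) (kk : Fin m → ℕ) : Prop :=
  (∀ i, Module.finrank F (Submodule.span F ((Γ i : Set (Fin K → F)))) = kk i) ∧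
  (∀ i, ∀ T ⊆ Γ i, T.card ≤ kk i →
    LinearIndependent F (fun t : {x // x ∈ T} => (t : Fin K → F))) ∧
  ∀ S : Finset (Fin K → F), (∀ x ∈ S, ∃ i, x ∈ Γ i) → (∀ i, (S ∩ Γ i).card ≤ kk i) →
    S.card = K → Submodule.span F (S : Set (Fin K → F)) = ⊤

/-- if `s ≥ 1` and `Γ` is admissible, then every evaluation set `S ⊆ Γ` of
size `K - 1` spans a hyperplane `H = span S` of `F^K`, and no block `Γ_j` that is not
selected by `S` (i.e. `|S ∩ Γ_j| < kk j`) is contained in `H`; consequently no component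
`C ⊇ Γ_j` is contained in `H`. -/
theorem statement5 [Fintype F] {m K s : ℕ} (hs : 1 ≤ s) (hK : 1 ≤ K)
    (kk : Fin m → ℕ) (hkk : ∀ i, 1 ≤ kk i) (hKs : K + s = ∑ i, kk i)
    (Γ : Fin m → Finset (Fin K → F))
    (hne : ∀ i, ∀ x ∈ Γ i, x ≠ (0 : Fin K → F))
    (hnp : ∀ i j, ∀ x ∈ Γ i, ∀ y ∈ Γ j, x ≠ y → ∀ t : F, x ≠ t • y)
    (hdis : ∀ i j, i ≠ j → Disjoint (Γ i) (Γ j))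
    (hadm : AdmissibleSets Γ kk) :
    ∀ S : Finset (Fin K → F), (∀ x ∈ S, ∃ i, x ∈ Γ i) →
      (∀ i, (S ∩ Γ i).card ≤ kk i) → S.card = K - 1 →
      Module.finrank F ↥(Submodule.span F (S : Set (Fin K → F))) = K - 1 ∧
      ∀ j, (S ∩ Γ j).card < kk j →
        ∀ C : Set (Fin K → F), ↑(Γ j) ⊆ C →
          ¬ C ⊆ (Submodule.span F (S : Set (Fin K → F)) : Set (Fin K → F)) := by
  obtain ⟨hdim, hind, hspan⟩ := hadm
  intro S hSΓ hScard hSsize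
  have hcardΓ : ∀ i, kk i ≤ (Γ i).card := by
    intro i
    rw [← hdim i]
    exact finrank_span_finset_le_card (Γ i)
  -- key lemma
  have key : ∀ j, (S ∩ Γ j).card < kk j → ∃ x ∈ Γ j, x ∉ S ∧
      Submodule.span F (insert x (S : Set (Fin K → F))) = ⊤ := by
    intro j hj
    have hlt : (S ∩ Γ j).card < (Γ j).card := hj.trans_le (hcardΓ j)
    obtain ⟨x, hxΓ, hxS⟩ : ∃ x ∈ Γ j, x ∉ S := by
      by_contra h
      push_neg at h
      have hsub : Γ j ⊆ S ∩ Γ j := fun y hy => Finset.mem_inter.2 ⟨h y hy, hy⟩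
      have := Finset.card_le_card hsub
      omega
    refine ⟨x, hxΓ, hxS, ?_⟩
    have h1 : ∀ y ∈ insert x S, ∃ i, y ∈ Γ i := by
      intro y hy
      rcases Finset.mem_insert.1 hy with rfl | hy
      · exact ⟨j, hxΓ⟩
      · exact hSΓ y hy
    have h2 : ∀ i, ((insert x S) ∩ Γ i).card ≤ kk i := by
      intro i
      by_cases hij : i = j
      · subst hij
        have hsub : (insert x S) ∩ Γ i ⊆ insert x (S ∩ Γ i) := by
          intro y hy
          simp only [Finset.mem_inter, Finset.mem_insert] at hy ⊢
          tauto
        have h1' := Finset.card_le_card hsub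
        have h2' := Finset.card_insert_le x (S ∩ Γ i)
        omega
      · have hx : x ∉ Γ i := fun h =>
          Finset.disjoint_left.1 (hdis i j hij) h hxΓ
        have heq : (insert x S) ∩ Γ i = S ∩ Γ i := by
          ext y
          simp only [Finset.mem_inter, Finset.mem_insert]
          constructor
          · rintro ⟨rfl | hy, hy'⟩
            · exact absurd hy' hx
            · exact ⟨hy, hy'⟩
          · rintro ⟨hy, hy'⟩; exact ⟨Or.inr hy, hy'⟩
        rw [heq]; exact hScard i
    have h3 : (insert x S).card = K := by
      rw [Finset.card_insert_of_notMem hxS, hSsize]; omega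
    have := hspan (insert x S) h1 h2 h3
    rwa [Finset.coe_insert] at this
  -- existence of some j0 with strict inequality
  have hsum : ∑ i, (S ∩ Γ i).card = S.card := by
    rw [← Finset.card_biUnion]
    · congr 1
      ext y
      simp only [Finset.mem_biUnion, Finset.mem_inter, Finset.mem_univ, true_and]
      constructor
      · rintro ⟨i, hy, _⟩; exact hy
      · intro hy
        obtain ⟨i, hi⟩ := hSΓ y hy
        exact ⟨i, hy, hi⟩
    · intro i _ j _ hij
      exact Finset.disjoint_left.2 fun y hy hy' =>
        Finset.disjoint_left.1 (hdis i j hij) (Finset.mem_inter.1 hy).2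
          (Finset.mem_inter.1 hy').2
  obtain ⟨j0, hj0⟩ : ∃ j, (S ∩ Γ j).card < kk j := by
    by_contra h
    push_neg at h
    have : ∑ i, kk i ≤ ∑ i, (S ∩ Γ i).card := Finset.sum_le_sum fun i _ => h i
    omega
  obtain ⟨x0, hx0Γ, hx0S, hx0span⟩ := key j0 hj0
  have hKrank : Module.finrank F (Fin K → F) = K := by
    simp [Module.finrank_fintype_fun_eq_card]
  have hrank : Module.finrank F ↥(Submodule.span F (S : Set (Fin K → F))) = K - 1 := by
    have hub : Module.finrank F ↥(Submodule.span F (S : Set (Fin K → F))) ≤ K - 1 := by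
      have := finrank_span_finset_le_card (R := F) S
      rwa [hSsize] at this
    have hlb : K ≤ Module.finrank F ↥(Submodule.span F (S : Set (Fin K → F))) + 1 := by
      have h1 : Submodule.span F (insert x0 (S : Set (Fin K → F))) =
          Submodule.span F {x0} ⊔ Submodule.span F (S : Set (Fin K → F)) :=
        Submodule.span_insert x0 _
      have h2 := Submodule.finrank_add_le_finrank_add_finrank
        (Submodule.span F {x0}) (Submodule.span F (S : Set (Fin K → F)))
      rw [← h1, hx0span] at h2
      have h3 : Module.finrank F ↥(Submodule.span F ({x0} : Set (Fin K → F))) ≤ 1 :=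
        le_of_eq (finrank_span_singleton (hne j0 x0 hx0Γ))
      have h4 : Module.finrank F (⊤ : Submodule F (Fin K → F)) = K := by
        rw [finrank_top, hKrank]
      omega
    omega
  refine ⟨hrank, ?_⟩
  intro j hj C hΓC hCH
  obtain ⟨x, hxΓ, hxS, hxspan⟩ := key j hj
  have hxH : x ∈ Submodule.span F (S : Set (Fin K → F)) := hCH (hΓC hxΓ)
  rw [Submodule.span_insert_eq_span hxH] at hxspan
  have : Module.finrank F ↥(Submodule.span F (S : Set (Fin K → F))) = K := by
    rw [hxspan, finrank_top, hKrank]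
  omega
end
end

section
/- Let C ⊆ Ω be a nontrivial circuit, i.e., a circuit that does not contain three points on any single line L_i. Then there exists a crossing circuit D ⊆ Ω such that: (1) range(D) = range(C); and (2) for every line L_j on which C contains exactly one point q_j, one has q_j ∈ D. -/
open scoped Classical
noncomputable section

variable {F : Type} [Field F]

/-- Linear span of a set of projective points. -/
def pspan {k : ℕ} (T : Set (Pt F k)) : Submodule F (Fin k → F) :=
  ⨆ x ∈ T, x.submodule

/-- A finite set of projective points is dependent if the dimension of its linear span is
at most its cardinality minus one. -/
def Dep {k : ℕ} (T : Finset (Pt F k)) : Prop :=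
  Module.finrank F (pspan (T : Set (Pt F k))) + 1 ≤ T.card

/-- A circuit is a dependent set that is minimal with respect to inclusion. -/
def IsCircuit {k : ℕ} (T : Finset (Pt F k)) : Prop :=
  Dep T ∧ ∀ T' ⊂ T, ¬ Dep T'

/-- A crossing circuit (for the line configuration `L`): a circuit contained in the union
of the lines which contains at most one point on each line. -/
def CrossingCircuit {k m : ℕ} (L : Fin m → Submodule F (Fin k → F))
    (T : Finset (Pt F k)) : Prop :=
  IsCircuit T ∧ (∀ x ∈ T, ∃ i, x.submodule ≤ L i) ∧
    ∀ i, (T.filter fun x => x.submodule ≤ L i).card ≤ 1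

namespace St7

lemma rep_inj {k : ℕ} : Function.Injective (Projectivization.rep : Pt F k → Fin k → F) := by
  intro x y h
  rw [← Projectivization.mk_rep x, ← Projectivization.mk_rep y]
  exact (Projectivization.mk_eq_mk_iff' F _ _ x.rep_nonzero y.rep_nonzero).2 ⟨1, by simp [h]⟩

lemma point_eq_of_smul {k : ℕ} {x y : Pt F k} {a : F} (h : x.rep = a • y.rep) : x = y := by
  rw [← Projectivization.mk_rep x, ← Projectivization.mk_rep y]
  exact (Projectivization.mk_eq_mk_iff' F _ _ x.rep_nonzero y.rep_nonzero).2 ⟨a, h.symm⟩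

lemma pspan_eq {k : ℕ} (T : Set (Pt F k)) :
    pspan T = Submodule.span F (Projectivization.rep '' T) := by
  apply le_antisymm
  · apply iSup₂_le
    intro x hx
    rw [Projectivization.submodule_eq]
    exact Submodule.span_mono (Set.singleton_subset_iff.2 ⟨x, hx, rfl⟩)
  · rw [Submodule.span_le]
    rintro v ⟨x, hx, rfl⟩
    have : x.rep ∈ x.submodule := by
      rw [Projectivization.submodule_eq]
      exact Submodule.mem_span_singleton_self _
    exact (le_iSup₂ (f := fun x (_ : x ∈ T) => Projectivization.submodule x) x hx) this

lemma dep_iff {k : ℕ} (s : Finset (Pt F k)) :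
    Dep s ↔ ¬ LinearIndependent F (fun x : {x // x ∈ s} => (x : Pt F k).rep) := by
  have hrange : Set.range (fun x : {x // x ∈ s} => (x : Pt F k).rep)
      = Projectivization.rep '' (s : Set (Pt F k)) := by
    ext v; simp [Set.mem_image]
  have hle : Module.finrank F (Submodule.span F (Projectivization.rep '' (s : Set (Pt F k))))
      ≤ s.card := by
    have := finrank_span_finset_le_card (R := F) (s.image Projectivization.rep)
    rw [Finset.coe_image] at this
    unfold Set.finrank at this
    have h2 := Finset.card_image_of_injective s (rep_inj (F := F) (k := k))
    omega
  rw [Dep, pspan_eq, linearIndependent_iff_card_eq_finrank_span, hrange, Fintype.card_coe]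
  unfold Set.finrank
  omega

lemma dep_of_rel {k : ℕ} (s : Finset (Pt F k)) (c : Pt F k → F)
    (hrel : ∑ x ∈ s, c x • x.rep = 0) (hex : ∃ x ∈ s, c x ≠ 0) : Dep s := by
  rw [dep_iff]
  intro hli
  rw [Fintype.linearIndependent_iff] at hli
  obtain ⟨x, hx, hcx⟩ := hex
  have := hli (fun x : {x // x ∈ s} => c x) ?_ ⟨x, hx⟩
  · exact hcx this
  · rw [← Finset.sum_coe_sort s (fun x => c x • x.rep)] at hrel
    exact hrel

lemma rel_of_dep {k : ℕ} (s : Finset (Pt F k)) (h : Dep s) :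
    ∃ c : Pt F k → F, (∀ x ∉ s, c x = 0) ∧ (∑ x ∈ s, c x • x.rep = 0) ∧ ∃ x ∈ s, c x ≠ 0 := by
  rw [dep_iff] at h
  rw [Fintype.not_linearIndependent_iff] at h
  obtain ⟨g, hg, ⟨i, hi⟩⟩ := h
  refine ⟨fun x => if h : x ∈ s then g ⟨x, h⟩ else 0, fun x hx => dif_neg hx, ?_, ⟨i, i.2, ?_⟩⟩
  · rw [← Finset.sum_coe_sort s]
    rw [← hg]
    apply Finset.sum_congr rfl
    intro x _
    simp only [dif_pos x.2]
  · simp only [dif_pos i.2]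
    exact hi

lemma lines_disjoint {m k : ℕ} (hk4 : 4 ≤ k) (P Q : Fin m → (Fin k → F))
    (hgen : ∀ T : Finset (Fin m ⊕ Fin m), T.card ≤ k →
      LinearIndependent F (fun t : {x // x ∈ T} => Sum.elim P Q (t : Fin m ⊕ Fin m)))
    {i j : Fin m} (hij : i ≠ j) {v : Fin k → F}
    (hvi : v ∈ Submodule.span F {P i, Q i}) (hvj : v ∈ Submodule.span F {P j, Q j}) :
    v = 0 := by
  set T : Finset (Fin m ⊕ Fin m) :=
    {Sum.inl i, Sum.inr i, Sum.inl j, Sum.inr j} with hT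
  have hcard : T.card ≤ k := by
    refine le_trans ?_ hk4
    apply le_trans (Finset.card_insert_le _ _)
    apply Nat.succ_le_succ
    apply le_trans (Finset.card_insert_le _ _)
    apply Nat.succ_le_succ
    apply le_trans (Finset.card_insert_le _ _)
    simp
  have hli := hgen T hcard
  have hmemli : Sum.inl i ∈ T := by simp [hT]
  have hmemri : Sum.inr i ∈ T := by simp [hT]
  have hmemlj : Sum.inl j ∈ T := by simp [hT]
  have hmemrj : Sum.inr j ∈ T := by simp [hT]
  have hdisj := hli.disjoint_span_image
    (s := {t : {x // x ∈ T} | (t : Fin m ⊕ Fin m) = Sum.inl i ∨ (t : Fin m ⊕ Fin m) = Sum.inr i})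
    (t := {t : {x // x ∈ T} | (t : Fin m ⊕ Fin m) = Sum.inl j ∨ (t : Fin m ⊕ Fin m) = Sum.inr j})
    (by
      rw [Set.disjoint_left]
      rintro a (ha | ha) (hb | hb) <;> rw [ha] at hb <;> simp_all)
  have him : ∀ (a : Fin m), Sum.inl a ∈ T → Sum.inr a ∈ T →
      (fun t : {x // x ∈ T} => Sum.elim P Q (t : Fin m ⊕ Fin m)) ''
        {t : {x // x ∈ T} | (t : Fin m ⊕ Fin m) = Sum.inl a ∨ (t : Fin m ⊕ Fin m) = Sum.inr a}
      = {P a, Q a} := by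
    intro a hla hra
    ext w
    constructor
    · rintro ⟨t, (ht | ht), rfl⟩ <;> simp [ht]
    · rintro (rfl | rfl)
      · exact ⟨⟨Sum.inl a, hla⟩, Or.inl rfl, rfl⟩
      · exact ⟨⟨Sum.inr a, hra⟩, Or.inr rfl, rfl⟩
  rw [him i hmemli hmemri, him j hmemlj hmemrj] at hdisj
  exact Submodule.disjoint_def.1 hdisj v hvi hvj

end St7

/-- for every nontrivial circuit `C` (a circuit in the union of the lines
containing at most two points on each line) there is a crossing circuit `D` with the same
range, containing every point of `C` that is alone on its line. -/
theorem statement7 [Fintype F] {m k : ℕ} (hm : 2 ≤ m) (hk4 : 4 ≤ k) (hkm : k + 1 ≤ 2 * m)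
    (P Q : Fin m → (Fin k → F))
    (hgen : ∀ T : Finset (Fin m ⊕ Fin m), T.card ≤ k →
      LinearIndependent F (fun t : {x // x ∈ T} => Sum.elim P Q (t : Fin m ⊕ Fin m)))
    (L : Fin m → Submodule F (Fin k → F))
    (hL : ∀ i, L i = Submodule.span F {P i, Q i})
    (C : Finset (Pt F k)) (hC : IsCircuit C)
    (hCΩ : ∀ x ∈ C, ∃ i, x.submodule ≤ L i)
    (hnt : ∀ i, (C.filter fun x => x.submodule ≤ L i).card ≤ 2) :
    ∃ D : Finset (Pt F k), CrossingCircuit L D ∧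
      (∀ i, (∃ x ∈ C, x.submodule ≤ L i) ↔ (∃ x ∈ D, x.submodule ≤ L i)) ∧
      ∀ i : Fin m, ∀ x : Pt F k,
        (C.filter fun y => y.submodule ≤ L i) = {x} → x ∈ D := by
  classical
  set r : Fin m → Finset (Pt F k) := fun i => C.filter (fun x => x.submodule ≤ L i) with hr
  set R : Finset (Fin m) := Finset.univ.filter (fun i => (r i).Nonempty) with hRdef
  have hsubmem : ∀ (x : Pt F k) (i : Fin m), x.submodule ≤ L i ↔ x.rep ∈ L i := by
    intro x i
    rw [Projectivization.submodule_eq, Submodule.span_singleton_le_iff_mem]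
  have hdisjL : ∀ {i j : Fin m}, i ≠ j → ∀ {v}, v ∈ L i → v ∈ L j → v = 0 := by
    intro i j hij v hvi hvj
    exact St7.lines_disjoint hk4 P Q hgen hij (by rwa [hL i] at hvi) (by rwa [hL j] at hvj)
  have huniq : ∀ (x : Pt F k), ∀ {i j}, x.submodule ≤ L i → x.submodule ≤ L j → i = j := by
    intro x i j hi hj
    by_contra hij
    exact x.rep_nonzero (hdisjL hij ((hsubmem x i).1 hi) ((hsubmem x j).1 hj))
  have hrmem : ∀ {x i}, x ∈ r i ↔ x ∈ C ∧ x.submodule ≤ L i := by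
    intro x i; simp [hr]
  have hrdisj : ∀ i ∈ R, ∀ j ∈ R, i ≠ j → Disjoint (r i) (r j) := by
    intro i _ j _ hij
    rw [Finset.disjoint_left]
    intro x hxi hxj
    exact hij (huniq x (hrmem.1 hxi).2 (hrmem.1 hxj).2)
  have hCun : C = R.biUnion r := by
    ext x
    simp only [Finset.mem_biUnion]
    constructor
    · intro hx
      obtain ⟨i, hi⟩ := hCΩ x hx
      have hxi : x ∈ r i := hrmem.2 ⟨hx, hi⟩
      refine ⟨i, ?_, hxi⟩
      rw [hRdef]
      exact Finset.mem_filter.2 ⟨Finset.mem_univ _, ⟨x, hxi⟩⟩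
    · rintro ⟨i, _, hxi⟩
      exact (hrmem.1 hxi).1
  have hCne : C.Nonempty := by
    have := hC.1
    rw [Dep] at this
    rw [← Finset.card_pos]
    omega
  obtain ⟨p0, hp0⟩ := hCne
  obtain ⟨c, hc0, hcsum, hcex⟩ := St7.rel_of_dep C hC.1
  have hall : ∀ x ∈ C, c x ≠ 0 := by
    intro x hx hcx
    set S : Finset (Pt F k) := C.filter (fun y => c y ≠ 0) with hS
    have hSsub : S ⊆ C := Finset.filter_subset _ _
    have hSss : S ⊂ C := by
      rw [Finset.ssubset_iff_subset_ne]
      refine ⟨hSsub, fun h => ?_⟩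
      have : x ∈ S := h ▸ hx
      rw [hS, Finset.mem_filter] at this
      exact this.2 hcx
    have hrel : ∑ y ∈ S, c y • y.rep = 0 := by
      rw [hS, Finset.sum_filter_of_ne]
      · exact hcsum
      · intro y _ hy hcy
        exact hy (by rw [hcy, zero_smul])
    obtain ⟨x1, hx1, hc1⟩ := hcex
    exact hC.2 S hSss (St7.dep_of_rel S c hrel
      ⟨x1, Finset.mem_filter.2 ⟨hx1, hc1⟩, hc1⟩)
  set w : Fin m → (Fin k → F) := fun i => ∑ x ∈ r i, c x • x.rep with hw
  have hwmem : ∀ i, w i ∈ L i := by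
    intro i
    apply Submodule.sum_mem
    intro x hx
    exact Submodule.smul_mem _ _ ((hsubmem x i).1 (hrmem.1 hx).2)
  -- case descriptions of lines
  have hcase : ∀ i ∈ R, (∃ x, r i = {x}) ∨ (∃ x y, x ≠ y ∧ r i = {x, y}) := by
    intro i hi
    have h1 : 1 ≤ (r i).card := Finset.card_pos.2 ((Finset.mem_filter.1 hi).2)
    have h2 : (r i).card ≤ 2 := hnt i
    have hor : (r i).card = 1 ∨ (r i).card = 2 := by omega
    rcases hor with h | h
    · exact Or.inl (Finset.card_eq_one.1 h)
    · exact Or.inr (Finset.card_eq_two.1 h)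
  have hwne : ∀ i ∈ R, w i ≠ 0 := by
    intro i hi
    rcases hcase i hi with ⟨x, hxe⟩ | ⟨x, y, hxy, hxe⟩
    · have hx : x ∈ r i := by rw [hxe]; simp
      rw [hw]
      simp only
      rw [hxe, Finset.sum_singleton]
      exact smul_ne_zero (hall x (hrmem.1 hx).1) x.rep_nonzero
    · have hx : x ∈ r i := by rw [hxe]; simp
      have hy : y ∈ r i := by rw [hxe]; simp
      intro h0
      rw [hw] at h0
      simp only at h0
      rw [hxe, Finset.sum_pair hxy] at h0
      have hcx := hall x (hrmem.1 hx).1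
      have h1 : c x • x.rep = (- c y) • y.rep := by
        rw [neg_smul]
        exact eq_neg_of_add_eq_zero_left h0
      have hrepx : x.rep = ((c x)⁻¹ * (- c y)) • y.rep := by
        calc x.rep = (c x)⁻¹ • (c x • x.rep) := by
              rw [smul_smul, inv_mul_cancel₀ hcx, one_smul]
        _ = (c x)⁻¹ • ((- c y) • y.rep) := by rw [h1]
        _ = ((c x)⁻¹ * (- c y)) • y.rep := by rw [smul_smul]
      exact hxy (St7.point_eq_of_smul hrepx)
  set d : Fin m → Pt F k := fun i => if h : w i ≠ 0 then Projectivization.mk F (w i) h else p0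
    with hd
  have hdeq : ∀ (i : Fin m) (h : w i ≠ 0), d i = Projectivization.mk F (w i) h := by
    intro i h; rw [hd]; simp only [dif_pos h]
  have hdsub : ∀ i ∈ R, (d i).submodule ≤ L i := by
    intro i hi
    rw [hdeq i (hwne i hi), Projectivization.submodule_mk, Submodule.span_singleton_le_iff_mem]
    exact hwmem i
  have hdline : ∀ i ∈ R, ∀ j, (d i).submodule ≤ L j → j = i := by
    intro i hi j hj
    exact huniq (d i) hj (hdsub i hi)
  have hdinj : ∀ x ∈ R, ∀ y ∈ R, d x = d y → x = y := by
    intro i hi j hj hij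
    exact (hdline i hi j (hij ▸ hdsub j hj)).symm
  set D : Finset (Pt F k) := R.image d with hD
  have hDcard : D.card = R.card := Finset.card_image_of_injOn hdinj
  set u : Fin m → F := fun i => if h : w i ≠ 0 then
      ((Projectivization.exists_smul_eq_mk_rep F (w i) h).choose : F) else 1 with hu
  have huprop : ∀ i ∈ R, u i ≠ 0 ∧ u i • w i = (d i).rep := by
    intro i hi
    have h := hwne i hi
    have hch := (Projectivization.exists_smul_eq_mk_rep F (w i) h).choose_spec
    rw [hu]
    simp only [dif_pos h]
    constructor
    · exact Units.ne_zero _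
    · rw [hdeq i h]
      simpa [Units.smul_def] using hch
  have hRsum : ∑ i ∈ R, w i = 0 := by
    rw [hw]
    rw [← Finset.sum_biUnion hrdisj, ← hCun]
    exact hcsum
  -- the fibers of d over R are singletons
  have hfib : ∀ i ∈ R, R.filter (fun j => d j = d i) = {i} := by
    intro i hi
    ext j
    simp only [Finset.mem_filter, Finset.mem_singleton]
    constructor
    · rintro ⟨hj, hji⟩; exact hdinj j hj i hi hji
    · rintro rfl; exact ⟨hi, rfl⟩
  set c' : Pt F k → F := fun z => ∑ i ∈ R.filter (fun j => d j = z), (u i)⁻¹ with hc'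
  have hc'd : ∀ i ∈ R, c' (d i) = (u i)⁻¹ := by
    intro i hi
    rw [hc']
    simp only
    rw [hfib i hi, Finset.sum_singleton]
  have hDrel : ∑ z ∈ D, c' z • z.rep = 0 := by
    rw [hD, Finset.sum_image hdinj]
    rw [← hRsum]
    apply Finset.sum_congr rfl
    intro i hi
    rw [hc'd i hi, ← (huprop i hi).2, smul_smul, inv_mul_cancel₀ (huprop i hi).1, one_smul]
  have hRne : R.Nonempty := by
    obtain ⟨i, hi⟩ := hCΩ p0 hp0
    exact ⟨i, by rw [hRdef]; simp [Finset.mem_filter]; exact ⟨p0, hrmem.2 ⟨hp0, hi⟩⟩⟩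
  have hDdep : Dep D := by
    obtain ⟨i0, hi0⟩ := hRne
    apply St7.dep_of_rel D c' hDrel
    refine ⟨d i0, Finset.mem_image_of_mem d hi0, ?_⟩
    rw [hc'd i0 hi0]
    exact inv_ne_zero (huprop i0 hi0).1
  -- minimality
  have hDmin : ∀ T ⊂ D, ¬ Dep T := by
    intro T hT hDepT
    set R2' : Finset (Fin m) := R.filter (fun i => d i ∈ T) with hR2'def
    have hR'sub : R2' ⊆ R := Finset.filter_subset _ _
    have hTeq : T = R2'.image d := by
      ext z
      simp only [Finset.mem_image, hR2'def, Finset.mem_filter]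
      constructor
      · intro hz
        have hzD : z ∈ D := hT.1 hz
        rw [hD] at hzD
        obtain ⟨i, hi, rfl⟩ := Finset.mem_image.1 hzD
        exact ⟨i, ⟨hi, hz⟩, rfl⟩
      · rintro ⟨i, ⟨hi, hiT⟩, rfl⟩
        exact hiT
    have hR'inj : ∀ x ∈ R2', ∀ y ∈ R2', d x = d y → x = y :=
      fun x hx y hy => hdinj x (hR'sub hx) y (hR'sub hy)
    have hTcard : T.card = R2'.card := by
      rw [hTeq]; exact Finset.card_image_of_injOn hR'inj
    set a : Fin m → Pt F k := fun i => if h : (r i).Nonempty then h.choose else p0 with ha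
    have hamem : ∀ i ∈ R, a i ∈ r i := by
      intro i hi
      have hne : (r i).Nonempty := (Finset.mem_filter.1 hi).2
      rw [ha]
      simp only [dif_pos hne]
      exact hne.choose_spec
    set R2 : Finset (Fin m) := R2'.filter (fun i => (r i).card = 2) with hR2
    set E : Finset (Fin k → F) := R2.image (fun i => (a i).rep) with hE
    set A : Submodule F (Fin k → F) :=
      Submodule.span F (Projectivization.rep '' (T : Set (Pt F k))) with hA
    set B : Submodule F (Fin k → F) := Submodule.span F (E : Set (Fin k → F)) with hB
    have hwA : ∀ i ∈ R2', w i ∈ A := by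
      intro i hi
      have hiR := hR'sub hi
      have hdiT : d i ∈ T := (Finset.mem_filter.1 hi).2
      have hrepA : (d i).rep ∈ A := Submodule.subset_span ⟨d i, hdiT, rfl⟩
      have h2 : w i = (u i)⁻¹ • (d i).rep := by
        rw [← (huprop i hiR).2, smul_smul, inv_mul_cancel₀ (huprop i hiR).1, one_smul]
      rw [h2]
      exact Submodule.smul_mem _ _ hrepA
    set T2 : Finset (Pt F k) := R2'.biUnion r with hT2
    have hT'sub : T2 ⊆ C := by
      intro z hz
      rw [hT2] at hz
      obtain ⟨i, _, hzi⟩ := Finset.mem_biUnion.1 hz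
      exact (hrmem.1 hzi).1
    have hspan : Submodule.span F (Projectivization.rep '' (T2 : Set (Pt F k))) ≤ A ⊔ B := by
      rw [Submodule.span_le]
      rintro v ⟨z, hz, rfl⟩
      have hz2 : z ∈ T2 := by exact_mod_cast hz
      obtain ⟨i, hiR', hzi⟩ := Finset.mem_biUnion.1 (by rw [hT2] at hz2; exact hz2)
      have hiR := hR'sub hiR'
      rcases hcase i hiR with ⟨x, hxe⟩ | ⟨x, y, hxy, hxe⟩
      · have hzx : z = x := by rw [hxe] at hzi; exact Finset.mem_singleton.1 hzi
        subst hzx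
        have hwz : w i = c z • z.rep := by
          rw [hw]; simp only; rw [hxe, Finset.sum_singleton]
        have hzr : z.rep = (c z)⁻¹ • w i := by
          rw [hwz, smul_smul, inv_mul_cancel₀ (hall z (hrmem.1 hzi).1), one_smul]
        rw [hzr]
        exact Submodule.mem_sup_left (Submodule.smul_mem _ _ (hwA i hiR'))
      · have hcard2 : (r i).card = 2 := by rw [hxe]; exact Finset.card_pair hxy
        have hiR2 : i ∈ R2 := Finset.mem_filter.2 ⟨hiR', hcard2⟩
        have haE : (a i).rep ∈ (E : Set (Fin k → F)) :=
          Finset.mem_coe.2 (Finset.mem_image_of_mem _ hiR2)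
        by_cases hza : z = a i
        · rw [hza]
          exact Submodule.mem_sup_right (Submodule.subset_span haE)
        · have hane : a i ∈ r i := hamem i hiR
          have hsubp : ({z, a i} : Finset (Pt F k)) ⊆ r i := by
            intro t ht
            rcases Finset.mem_insert.1 ht with rfl | ht
            · exact hzi
            · rw [Finset.mem_singleton.1 ht]; exact hane
          have hpair : r i = {z, a i} :=
            (Finset.eq_of_subset_of_card_le hsubp
              (by rw [hcard2, Finset.card_pair hza])).symm
          have hwz : w i = c z • z.rep + c (a i) • (a i).rep := by
            rw [hw]; simp only; rw [hpair, Finset.sum_pair hza]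
          have hcz := hall z (hrmem.1 hzi).1
          have hzr : z.rep = (c z)⁻¹ • (w i - c (a i) • (a i).rep) := by
            rw [hwz, add_sub_cancel_right, smul_smul, inv_mul_cancel₀ hcz, one_smul]
          rw [hzr]
          apply Submodule.smul_mem
          apply Submodule.sub_mem
          · exact Submodule.mem_sup_left (hwA i hiR')
          · exact Submodule.mem_sup_right
              (Submodule.smul_mem _ _ (Submodule.subset_span haE))
    have hEcard : E.card ≤ R2.card := Finset.card_image_le
    have hfinE : Module.finrank F B ≤ R2.card := by
      have hsp := finrank_span_finset_le_card (R := F) E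
      unfold Set.finrank at hsp
      rw [hB]
      omega
    have hfinA : Module.finrank F A + 1 ≤ R2'.card := by
      have hdt := hDepT
      rw [Dep, St7.pspan_eq, hTcard] at hdt
      rw [hA]
      exact hdt
    have hsup : Module.finrank F (A ⊔ B : Submodule F (Fin k → F)) ≤
        Module.finrank F A + Module.finrank F B := by
      have hie := Submodule.finrank_sup_add_finrank_inf_eq A B
      omega
    have hT'count : R2'.card + R2.card ≤ T2.card := by
      rw [hT2, Finset.card_biUnion
        (fun i hi j hj hij => hrdisj i (hR'sub hi) j (hR'sub hj) hij)]
      have heq : R2'.card + R2.card = ∑ i ∈ R2', (1 + if (r i).card = 2 then 1 else 0) := by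
        rw [Finset.sum_add_distrib, Finset.sum_const, smul_eq_mul, mul_one, hR2,
          Finset.card_filter, Finset.card_filter]
      rw [heq]
      apply Finset.sum_le_sum
      intro i hi
      have h1 : 1 ≤ (r i).card :=
        Finset.card_pos.2 ((Finset.mem_filter.1 (hR'sub hi)).2)
      split_ifs with h
      · omega
      · omega
    have hfinT' : Module.finrank F (Submodule.span F
        (Projectivization.rep '' (T2 : Set (Pt F k)))) ≤
        Module.finrank F (A ⊔ B : Submodule F (Fin k → F)) :=
      Submodule.finrank_mono hspan
    have hDepT2 : Dep T2 := by
      rw [Dep, St7.pspan_eq]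
      omega
    by_cases hTC : T2 = C
    · have hRR' : R ⊆ R2' := by
        intro i hi
        have hane := hamem i hi
        have haC : a i ∈ C := (hrmem.1 hane).1
        rw [← hTC, hT2] at haC
        obtain ⟨j, hjR', haj⟩ := Finset.mem_biUnion.1 haC
        have hij : i = j := huniq (a i) (hrmem.1 hane).2 (hrmem.1 haj).2
        rw [hij]
        exact hjR'
      have hReq : R2' = R := Finset.Subset.antisymm hR'sub hRR'
      have hTD : T = D := by rw [hTeq, hReq, hD]
      exact hT.ne hTD
    · exact hC.2 T2 (Finset.ssubset_iff_subset_ne.2 ⟨hT'sub, hTC⟩) hDepT2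
  -- conclusions
  refine ⟨D, ⟨⟨hDdep, hDmin⟩, ?_, ?_⟩, ?_, ?_⟩
  · -- every point of D on some line
    intro x hx
    rw [hD] at hx
    obtain ⟨i, hi, rfl⟩ := Finset.mem_image.1 hx
    exact ⟨i, hdsub i hi⟩
  · -- at most one point of D per line
    intro i
    have hsub : D.filter (fun x => x.submodule ≤ L i) ⊆ {d i} := by
      intro z hz
      obtain ⟨hzD, hzi⟩ := Finset.mem_filter.1 hz
      rw [hD] at hzD
      obtain ⟨j, hj, rfl⟩ := Finset.mem_image.1 hzD
      have hij := hdline j hj i hzi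
      exact Finset.mem_singleton.2 (by rw [hij])
    exact le_trans (Finset.card_le_card hsub) (by simp)
  · -- range equality
    intro i
    constructor
    · rintro ⟨x, hx, hxi⟩
      have hxr : x ∈ r i := hrmem.2 ⟨hx, hxi⟩
      have hiR : i ∈ R := by
        rw [hRdef]
        exact Finset.mem_filter.2 ⟨Finset.mem_univ _, ⟨x, hxr⟩⟩
      exact ⟨d i, by rw [hD]; exact Finset.mem_image_of_mem d hiR, hdsub i hiR⟩
    · rintro ⟨z, hzD, hzi⟩
      rw [hD] at hzD
      obtain ⟨j, hj, rfl⟩ := Finset.mem_image.1 hzD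
      have hij := hdline j hj i hzi
      subst hij
      obtain ⟨x, hx⟩ := (Finset.mem_filter.1 hj).2
      exact ⟨x, (hrmem.1 hx).1, (hrmem.1 hx).2⟩
  · -- solo points
    intro i x hfil
    have hfil2 : r i = {x} := hfil
    have hxi : x ∈ r i := by rw [hfil2]; simp
    have hiR : i ∈ R := by
      rw [hRdef]
      exact Finset.mem_filter.2 ⟨Finset.mem_univ _, ⟨x, hxi⟩⟩
    have hwz : w i = c x • x.rep := by
      rw [hw]; simp only; rw [hfil2, Finset.sum_singleton]
    have hdx : d i = x := by
      rw [hdeq i (hwne i hiR)]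
      conv_rhs => rw [← Projectivization.mk_rep x]
      apply (Projectivization.mk_eq_mk_iff' F _ _ _ x.rep_nonzero).2
      exact ⟨c x, hwz.symm⟩
    rw [← hdx, hD]
    exact Finset.mem_image_of_mem d hiR
end
end

section
/- Let Y ⊆ Ω be a dependent set with |Y| = k that contains no trivial circuit (no three points of Y lie on one line L_i). Then there exist an integer u with ⌈(k+1)/2⌉ ≤ u ≤ min{k, m} and a crossing circuit D ⊆ Ω of size u such that |Y ∩ D| ≥ 2u − k. -/
open scoped Classical
noncomputable section

variable {F : Type} [Field F]

lemma pspan_eq {k : ℕ} (T : Finset (Pt F k)) :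
    pspan (T : Set (Pt F k)) = Submodule.span F (Set.range fun x : T => (x : Pt F k).rep) := by
  rw [Submodule.span_range_eq_iSup, pspan]
  simp only [Projectivization.submodule_eq]
  rw [iSup_subtype]
  rfl

lemma dep_iff {k : ℕ} (T : Finset (Pt F k)) :
    Dep T ↔ ¬ LinearIndependent F (fun x : T => (x : Pt F k).rep) := by
  rw [Dep, pspan_eq, linearIndependent_iff_card_eq_finrank_span]
  have hcard : Fintype.card T = T.card := Fintype.card_coe T
  have hle : Set.finrank F (Set.range fun x : T => (x : Pt F k).rep) ≤ T.card := by
    have := finrank_range_le_card (R := F) (fun x : T => (x : Pt F k).rep)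
    rwa [hcard] at this
  rw [Set.finrank] at *
  constructor
  · intro h h'
    omega
  · intro h
    rcases lt_or_eq_of_le hle with h' | h'
    · omega
    · exact absurd (hcard.trans h'.symm) h

/-- Dep via an explicit nontrivial combination. -/
lemma dep_of_comb {k : ℕ} (T : Finset (Pt F k)) (g : Pt F k → F)
    (hsum : ∑ x ∈ T, g x • x.rep = 0) (x₀ : Pt F k) (hx₀ : x₀ ∈ T) (hg : g x₀ ≠ 0) :
    Dep T := by
  rw [dep_iff]
  intro hli
  rw [Fintype.linearIndependent_iff] at hli
  have := hli (fun x => g x) ?_ ⟨x₀, hx₀⟩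
  · exact hg this
  · rw [← hsum, ← Finset.sum_attach T (fun x => g x • x.rep)]
    rfl

lemma comb_of_dep {k : ℕ} (T : Finset (Pt F k)) (hT : Dep T) :
    ∃ g : Pt F k → F, (∑ x ∈ T, g x • x.rep = 0) ∧ ∃ x₀ ∈ T, g x₀ ≠ 0 := by
  rw [dep_iff, Fintype.not_linearIndependent_iff] at hT
  obtain ⟨g, hsum, i, hi⟩ := hT
  refine ⟨fun x => if h : x ∈ T then g ⟨x, h⟩ else 0, ?_, i, i.2, by simpa [i.2] using hi⟩
  rw [← Finset.sum_attach T (fun x => (if h : x ∈ T then g ⟨x, h⟩ else 0) • x.rep)]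
  rw [← hsum]
  apply Finset.sum_congr rfl
  intro x _
  simp [x.2]

lemma exists_circuit {k : ℕ} (T : Finset (Pt F k)) (hT : Dep T) :
    ∃ C ⊆ T, IsCircuit C := by
  induction T using Finset.strongInductionOn with
  | _ T ih =>
    by_cases h : ∀ T' ⊂ T, ¬ Dep T'
    · exact ⟨T, Finset.Subset.refl T, hT, h⟩
    · push_neg at h
      obtain ⟨T', hT', hdep⟩ := h
      obtain ⟨C, hC, hcirc⟩ := ih T' hT' hdep
      exact ⟨C, hC.trans hT'.subset, hcirc⟩

/-- A circuit has a dependence with all coefficients nonzero. -/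
lemma circuit_comb {k : ℕ} (C : Finset (Pt F k)) (hC : IsCircuit C) :
    ∃ g : Pt F k → F, (∑ x ∈ C, g x • x.rep = 0) ∧ ∀ x ∈ C, g x ≠ 0 := by
  obtain ⟨g, hsum, x₀, hx₀, hg₀⟩ := comb_of_dep C hC.1
  refine ⟨g, hsum, fun x hx => ?_⟩
  intro hgx
  set S := C.filter (fun y => g y ≠ 0) with hS
  have hSsub : S ⊂ C := by
    refine Finset.ssubset_iff_of_subset (Finset.filter_subset _ _) |>.2 ⟨x, hx, ?_⟩
    simp [hS, hgx]
  apply hC.2 S hSsub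
  apply dep_of_comb S g ?_ x₀ ?_ hg₀
  · rw [← hsum]
    apply Finset.sum_subset hSsub.subset
    intro y hy hy'
    simp only [hS, Finset.mem_filter, not_and, not_not] at hy'
    rw [hy' hy, zero_smul]
  · simp [hS, hx₀, hg₀]

/-- Two distinct projective points have genuinely independent representatives. -/
lemma two_rep_ne {k : ℕ} {x y : Pt F k} (hxy : x ≠ y) {a b : F} (ha : a ≠ 0) :
    a • x.rep + b • y.rep ≠ 0 := by
  intro h
  apply hxy
  have hx : x.rep = (-(a⁻¹ * b)) • y.rep := by
    have : a • x.rep = -(b • y.rep) := by linear_combination (norm := module) h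
    calc x.rep = a⁻¹ • (a • x.rep) := by rw [smul_smul, inv_mul_cancel₀ ha, one_smul]
    _ = a⁻¹ • (-(b • y.rep)) := by rw [this]
    _ = (-(a⁻¹ * b)) • y.rep := by rw [smul_neg, smul_smul, neg_smul]
  have : Projectivization.mk F x.rep x.rep_nonzero = Projectivization.mk F y.rep y.rep_nonzero := by
    rw [Projectivization.mk_eq_mk_iff']
    exact ⟨_, hx.symm⟩
  rwa [Projectivization.mk_rep, Projectivization.mk_rep] at this

/-- Key lemma: vectors on few lines summing to zero must each vanish. -/
lemma key_indep {m k : ℕ} (P Q : Fin m → (Fin k → F))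
    (hgen : ∀ T : Finset (Fin m ⊕ Fin m), T.card ≤ k →
      LinearIndependent F (fun t : {x // x ∈ T} => Sum.elim P Q (t : Fin m ⊕ Fin m)))
    (L : Fin m → Submodule F (Fin k → F))
    (hL : ∀ i, L i = Submodule.span F {P i, Q i})
    (J : Finset (Fin m)) (hJ : 2 * J.card ≤ k)
    (w : Fin m → Fin k → F) (hw : ∀ j ∈ J, w j ∈ L j)
    (hsum : ∑ j ∈ J, w j = 0) : ∀ j ∈ J, w j = 0 := by
  have hab : ∀ j : Fin m, ∃ ab : F × F, j ∈ J → ab.1 • P j + ab.2 • Q j = w j := by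
    intro j
    by_cases h : j ∈ J
    · have := hw j h
      rw [hL j, Submodule.mem_span_pair] at this
      obtain ⟨a, b, hab⟩ := this
      exact ⟨(a, b), fun _ => hab⟩
    · exact ⟨(0, 0), fun h' => absurd h' h⟩
  choose ab habs using hab
  set T : Finset (Fin m ⊕ Fin m) := J.image Sum.inl ∪ J.image Sum.inr with hT
  have hdisj : Disjoint (J.image Sum.inl) (J.image (Sum.inr : Fin m → Fin m ⊕ Fin m)) := by
    simp only [Finset.disjoint_left, Finset.mem_image]
    rintro a ⟨x, _, rfl⟩ ⟨y, _, h⟩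
    exact Sum.inl_ne_inr h.symm
  have hTcard : T.card ≤ k := by
    rw [hT, Finset.card_union_of_disjoint hdisj,
      Finset.card_image_of_injective _ Sum.inl_injective,
      Finset.card_image_of_injective _ Sum.inr_injective]
    omega
  have hli := hgen T hTcard
  rw [Fintype.linearIndependent_iff] at hli
  set g : Fin m ⊕ Fin m → F := Sum.elim (fun j => if j ∈ J then (ab j).1 else 0)
    (fun j => if j ∈ J then (ab j).2 else 0) with hg
  have hgsum : ∑ t ∈ T, g t • Sum.elim P Q t = 0 := by
    rw [hT, Finset.sum_union hdisj, Finset.sum_image (fun a _ b _ => Sum.inl.inj),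
      Finset.sum_image (fun a _ b _ => Sum.inr.inj)]
    rw [← Finset.sum_add_distrib, ← hsum]
    apply Finset.sum_congr rfl
    intro j hj
    simp only [hg, Sum.elim_inl, Sum.elim_inr, if_pos hj]
    exact habs j hj
  have hzero : ∀ t : {x // x ∈ T}, g t = 0 := by
    apply hli (fun t => g t)
    rw [← Finset.sum_attach T (fun t => g t • Sum.elim P Q t)] at hgsum
    exact hgsum
  intro j hj
  have hmem1 : Sum.inl j ∈ T := by
    rw [hT, Finset.mem_union]
    exact Or.inl (Finset.mem_image_of_mem _ hj)
  have hmem2 : Sum.inr j ∈ T := by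
    rw [hT, Finset.mem_union]
    exact Or.inr (Finset.mem_image_of_mem _ hj)
  have h1 : g (Sum.inl j) = 0 := hzero ⟨Sum.inl j, hmem1⟩
  have h2 : g (Sum.inr j) = 0 := hzero ⟨Sum.inr j, hmem2⟩
  simp only [hg, Sum.elim_inl, Sum.elim_inr, if_pos hj] at h1 h2
  rw [← habs j hj, h1, h2, zero_smul, zero_smul, add_zero]

/-- Distinct lines meet only in zero. -/
lemma line_disjoint {m k : ℕ} (hk4 : 4 ≤ k) (P Q : Fin m → (Fin k → F))
    (hgen : ∀ T : Finset (Fin m ⊕ Fin m), T.card ≤ k →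
      LinearIndependent F (fun t : {x // x ∈ T} => Sum.elim P Q (t : Fin m ⊕ Fin m)))
    (L : Fin m → Submodule F (Fin k → F))
    (hL : ∀ i, L i = Submodule.span F {P i, Q i})
    {i j : Fin m} (hij : i ≠ j) {v : Fin k → F} (hvi : v ∈ L i) (hvj : v ∈ L j) : v = 0 := by
  have := key_indep P Q hgen L hL {i, j}
    (by rw [Finset.card_pair hij]; omega)
    (fun t => if t = i then v else -v)
    (by
      intro t ht
      rcases Finset.mem_insert.1 ht with rfl | ht
      · simpa using hvi
      · rw [Finset.mem_singleton] at ht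
        subst ht
        simpa [Ne.symm hij] using neg_mem hvj)
    (by
      rw [Finset.sum_pair hij]
      simp [Ne.symm hij])
  have := this i (by simp)
  simpa using this

/-- A projective point lies on at most one line. -/
lemma line_unique {m k : ℕ} (hk4 : 4 ≤ k) (P Q : Fin m → (Fin k → F))
    (hgen : ∀ T : Finset (Fin m ⊕ Fin m), T.card ≤ k →
      LinearIndependent F (fun t : {x // x ∈ T} => Sum.elim P Q (t : Fin m ⊕ Fin m)))
    (L : Fin m → Submodule F (Fin k → F))
    (hL : ∀ i, L i = Submodule.span F {P i, Q i})
    {x : Pt F k} {i j : Fin m} (hi : x.submodule ≤ L i) (hj : x.submodule ≤ L j) : i = j := by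
  by_contra hij
  have hrep : x.rep ∈ x.submodule := by
    rw [Projectivization.submodule_eq]
    exact Submodule.mem_span_singleton_self _
  exact x.rep_nonzero (line_disjoint hk4 P Q hgen L hL hij (hi hrep) (hj hrep))
set_option maxHeartbeats 1000000 in
theorem statement9 [Fintype F] {m k : ℕ} (hm : 2 ≤ m) (hk4 : 4 ≤ k) (hkm : k + 1 ≤ 2 * m)
    (P Q : Fin m → (Fin k → F))
    (hgen : ∀ T : Finset (Fin m ⊕ Fin m), T.card ≤ k →
      LinearIndependent F (fun t : {x // x ∈ T} => Sum.elim P Q (t : Fin m ⊕ Fin m)))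
    (L : Fin m → Submodule F (Fin k → F))
    (hL : ∀ i, L i = Submodule.span F {P i, Q i})
    (Y : Finset (Pt F k)) (hYdep : Dep Y) (hYcard : Y.card = k)
    (hYΩ : ∀ x ∈ Y, ∃ i, x.submodule ≤ L i)
    (hYnt : ∀ i, (Y.filter fun x => x.submodule ≤ L i).card ≤ 2) :
    ∃ (u : ℕ) (D : Finset (Pt F k)), k + 1 ≤ 2 * u ∧ u ≤ min k m ∧
      CrossingCircuit L D ∧ D.card = u ∧ 2 * u - k ≤ (Y ∩ D).card := by
  -- the line of a point
  obtain ⟨ℓ, hℓ⟩ : ∃ ℓ : Pt F k → Fin m,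
      ∀ (x : Pt F k) (i : Fin m), x.submodule ≤ L i → ℓ x = i := by
    refine ⟨fun x => if h : ∃ i, x.submodule ≤ L i then h.choose else ⟨0, by omega⟩, ?_⟩
    intro x i hi
    have h : ∃ i, x.submodule ≤ L i := ⟨i, hi⟩
    simp only [dif_pos h]
    exact line_unique hk4 P Q hgen L hL h.choose_spec hi
  have hℓmem : ∀ x : Pt F k, (∃ i, x.submodule ≤ L i) → x.submodule ≤ L (ℓ x) := by
    rintro x ⟨i, hi⟩
    rw [hℓ x i hi]
    exact hi
  -- a circuit inside Y with nonzero coefficients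
  obtain ⟨C, hCY, hC⟩ := exists_circuit Y hYdep
  obtain ⟨g, hgsum, hgne⟩ := circuit_comb C hC
  have hCcard : C.card ≤ k := le_trans (Finset.card_le_card hCY) (le_of_eq hYcard)
  have hCne : C.Nonempty := by
    rw [← Finset.card_pos]
    have := hC.1
    rw [Dep] at this
    omega
  have hCline : ∀ x ∈ C, x.submodule ≤ L (ℓ x) := fun x hx => hℓmem x (hYΩ x (hCY hx))
  -- group the dependence by lines
  set J : Finset (Fin m) := C.image ℓ with hJdef
  obtain ⟨w, hwdef⟩ : ∃ w : Fin m → Fin k → F,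
      ∀ j, w j = ∑ x ∈ C.filter (fun x => ℓ x = j), g x • x.rep := ⟨_, fun j => rfl⟩
  have hwL : ∀ j, w j ∈ L j := by
    intro j
    rw [hwdef j]
    apply Submodule.sum_mem
    intro x hx
    rw [Finset.mem_filter] at hx
    apply Submodule.smul_mem
    have := hCline x hx.1
    rw [hx.2] at this
    exact this (by rw [Projectivization.submodule_eq]; exact Submodule.mem_span_singleton_self _)
  have hwsum : ∑ j ∈ J, w j = 0 := by
    rw [Finset.sum_congr rfl (fun j _ => hwdef j), hJdef]
    rw [Finset.sum_fiberwise_of_maps_to (fun x hx => Finset.mem_image_of_mem ℓ hx)]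
    exact hgsum
  -- fibers have size 1 or 2
  have hfibsub : ∀ j, C.filter (fun x => ℓ x = j) ⊆ Y.filter (fun x => x.submodule ≤ L j) := by
    intro j x hx
    rw [Finset.mem_filter] at hx ⊢
    refine ⟨hCY hx.1, ?_⟩
    have := hCline x hx.1
    rwa [hx.2] at this
  have hfib2 : ∀ j, (C.filter (fun x => ℓ x = j)).card ≤ 2 :=
    fun j => le_trans (Finset.card_le_card (hfibsub j)) (hYnt j)
  have hfibne : ∀ j ∈ J, (C.filter (fun x => ℓ x = j)).Nonempty := by
    intro j hj
    rw [hJdef, Finset.mem_image] at hj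
    obtain ⟨x, hx, hxj⟩ := hj
    exact ⟨x, Finset.mem_filter.2 ⟨hx, hxj⟩⟩
  have hwne : ∀ j ∈ J, w j ≠ 0 := by
    intro j hj
    have h1 := Finset.card_pos.2 (hfibne j hj)
    have h2 := hfib2 j
    interval_cases h : (C.filter (fun x => ℓ x = j)).card
    · obtain ⟨x, hx⟩ := Finset.card_eq_one.1 h
      rw [hwdef j]
      simp only [hx, Finset.sum_singleton]
      have hxC : x ∈ C := (Finset.mem_filter.1 (hx ▸ Finset.mem_singleton_self x)).1
      exact smul_ne_zero (hgne x hxC) x.rep_nonzero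
    · obtain ⟨x, y, hxy, hx⟩ := Finset.card_eq_two.1 h
      rw [hwdef j]
      simp only [hx]
      rw [Finset.sum_pair hxy]
      have hxmem : x ∈ C.filter (fun x => ℓ x = j) := hx ▸ Finset.mem_insert_self x {y}
      have hxC : x ∈ C := (Finset.mem_filter.1 hxmem).1
      exact two_rep_ne hxy (hgne x hxC)
  -- the crossing dependent set D0
  set D0 : Finset (Pt F k) :=
    J.attach.image (fun j => Projectivization.mk F (w j.1) (hwne j.1 j.2)) with hD0def
  have hD0mem : ∀ y ∈ D0, ∃ j, ∃ h : j ∈ J, y = Projectivization.mk F (w j) (hwne j h) := by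
    intro y hy
    rw [hD0def, Finset.mem_image] at hy
    obtain ⟨j, _, rfl⟩ := hy
    exact ⟨j, j.2, rfl⟩
  have hmkline : ∀ (j : Fin m) (h : j ∈ J),
      (Projectivization.mk F (w j) (hwne j h)).submodule ≤ L j := by
    intro j h
    rw [Projectivization.submodule_mk, Submodule.span_singleton_le_iff_mem]
    exact hwL j
  have hℓmk : ∀ (j : Fin m) (h : j ∈ J), ℓ (Projectivization.mk F (w j) (hwne j h)) = j :=
    fun j h => hℓ _ j (hmkline j h)
  have hD0line : ∀ y ∈ D0, y.submodule ≤ L (ℓ y) := by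
    intro y hy
    obtain ⟨j, hj, rfl⟩ := hD0mem y hy
    rw [hℓmk j hj]
    exact hmkline j hj
  have hD0uniq : ∀ y ∈ D0, ∀ z ∈ D0, ℓ y = ℓ z → y = z := by
    intro y hy z hz hyz
    obtain ⟨j, hj, rfl⟩ := hD0mem y hy
    obtain ⟨j', hj', rfl⟩ := hD0mem z hz
    rw [hℓmk j hj, hℓmk j' hj'] at hyz
    subst hyz
    rfl
  have hJD0 : ∀ y ∈ D0, ℓ y ∈ J := by
    intro y hy
    obtain ⟨j, hj, rfl⟩ := hD0mem y hy
    rw [hℓmk j hj]; exact hj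
  have hinj : Function.Injective
      (fun j : {x // x ∈ J} => Projectivization.mk F (w j.1) (hwne j.1 j.2)) := by
    intro a b hab
    have := hℓmk a.1 a.2
    simp only at hab
    rw [hab, hℓmk b.1 b.2] at this
    exact Subtype.ext this.symm
  have hD0card : D0.card = J.card := by
    rw [hD0def, Finset.card_image_of_injective _ hinj, Finset.card_attach]
  have hD0dep : Dep D0 := by
    -- coefficients relating reps of D0 to the w vectors
    have hcoef : ∀ y ∈ D0, ∃ c : F, c ≠ 0 ∧ c • y.rep = w (ℓ y) := by
      intro y hy
      obtain ⟨j, hj, rfl⟩ := hD0mem y hy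
      obtain ⟨a, ha⟩ := Projectivization.exists_smul_eq_mk_rep F (w j) (hwne j hj)
      rw [hℓmk j hj]
      refine ⟨(a⁻¹ : Fˣ), Units.ne_zero _, ?_⟩
      rw [← ha, Units.smul_def, smul_smul]
      norm_cast
      simp
    set g' : Pt F k → F := fun y =>
      if h : ∃ c : F, c ≠ 0 ∧ c • y.rep = w (ℓ y) then h.choose else 0 with hg'def
    have hg' : ∀ y ∈ D0, g' y ≠ 0 ∧ g' y • y.rep = w (ℓ y) := by
      intro y hy
      have h := hcoef y hy
      rw [hg'def]
      simp only [dif_pos h]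
      exact h.choose_spec
    obtain ⟨y₀, hy₀⟩ : D0.Nonempty := by
      obtain ⟨x, hx⟩ := hCne
      have : J.Nonempty := ⟨ℓ x, Finset.mem_image_of_mem ℓ hx⟩
      rw [← Finset.card_pos, hD0card, Finset.card_pos]
      exact this
    apply dep_of_comb D0 g' ?_ y₀ hy₀ (hg' y₀ hy₀).1
    have : ∑ y ∈ D0, g' y • y.rep = ∑ y ∈ D0, w (ℓ y) :=
      Finset.sum_congr rfl (fun y hy => (hg' y hy).2)
    rw [this, ← hwsum]
    rw [hD0def]
    rw [Finset.sum_image (fun a _ b _ h => hinj h)]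
    rw [← Finset.sum_attach J w]
    apply Finset.sum_congr rfl
    intro j _
    rw [hℓmk j.1 j.2]
  -- extract the crossing circuit
  obtain ⟨D, hDD0, hD⟩ := exists_circuit D0 hD0dep
  have hDline : ∀ y ∈ D, y.submodule ≤ L (ℓ y) := fun y hy => hD0line y (hDD0 hy)
  have hDuniq : ∀ y ∈ D, ∀ z ∈ D, ℓ y = ℓ z → y = z :=
    fun y hy z hz h => hD0uniq y (hDD0 hy) z (hDD0 hz) h
  refine ⟨D.card, D, ?_, ?_, ⟨hD, ?_, ?_⟩, rfl, ?_⟩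
  -- k + 1 ≤ 2 * D.card
  · by_contra hcon
    push_neg at hcon
    obtain ⟨g2, hg2sum, y₀, hy₀, hg2ne⟩ := comb_of_dep D hD.1
    set JD := D.image ℓ with hJDdef
    set w2 : Fin m → Fin k → F := fun j => ∑ y ∈ D.filter (fun y => ℓ y = j), g2 y • y.rep
      with hw2def
    have hw2L : ∀ j ∈ JD, w2 j ∈ L j := by
      intro j _
      apply Submodule.sum_mem
      intro y hy
      rw [Finset.mem_filter] at hy
      apply Submodule.smul_mem
      have := hDline y hy.1
      rw [hy.2] at this
      exact this (by rw [Projectivization.submodule_eq]; exact Submodule.mem_span_singleton_self _)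
    have hw2sum : ∑ j ∈ JD, w2 j = 0 := by
      rw [hw2def, hJDdef]
      rw [Finset.sum_fiberwise_of_maps_to (fun x hx => Finset.mem_image_of_mem ℓ hx)]
      exact hg2sum
    have hJDcard : 2 * JD.card ≤ k := by
      have himg : JD.card ≤ D.card := by
        rw [hJDdef]; exact Finset.card_image_le
      omega
    have hzero := key_indep P Q hgen L hL JD hJDcard w2 hw2L hw2sum
    have hy₀fib : D.filter (fun y => ℓ y = ℓ y₀) = {y₀} := by
      apply Finset.eq_singleton_iff_unique_mem.2
      refine ⟨Finset.mem_filter.2 ⟨hy₀, rfl⟩, ?_⟩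
      intro y hy
      rw [Finset.mem_filter] at hy
      exact hDuniq y hy.1 y₀ hy₀ hy.2
    have := hzero (ℓ y₀) (Finset.mem_image_of_mem ℓ hy₀)
    rw [hw2def] at this
    simp only [hy₀fib, Finset.sum_singleton] at this
    exact hg2ne ((smul_eq_zero.1 this).resolve_right y₀.rep_nonzero)
  -- D.card ≤ min k m
  · have h1 : D.card ≤ D0.card := Finset.card_le_card hDD0
    have h2 : J.card ≤ C.card := Finset.card_image_le
    have h3 : J.card ≤ m := by
      simpa using Finset.card_le_univ J
    omega
  -- points of D on lines
  · exact fun y hy => ⟨ℓ y, hDline y hy⟩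
  -- at most one point per line
  · intro i
    rw [Finset.card_le_one]
    intro a ha b hb
    rw [Finset.mem_filter] at ha hb
    have hai : ℓ a = i := hℓ a i ha.2
    have hbi : ℓ b = i := hℓ b i hb.2
    exact hDuniq a ha.1 b hb.1 (hai.trans hbi.symm)
  -- the counting estimate
  · set JD := D.image ℓ with hJDdef
    have hJDJ : JD ⊆ J := by
      intro j hj
      rw [hJDdef, Finset.mem_image] at hj
      obtain ⟨y, hy, rfl⟩ := hj
      exact hJD0 y (hDD0 hy)
    have hJDcard : JD.card = D.card := by
      rw [hJDdef]
      apply Finset.card_image_of_injOn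
      intro a ha b hb hab
      exact hDuniq a ha b hb hab
    set JD1 := JD.filter (fun j => (C.filter (fun x => ℓ x = j)).card = 1) with hJD1def
    set JD2 := JD.filter (fun j => ¬ (C.filter (fun x => ℓ x = j)).card = 1) with hJD2def
    have hsplit : JD1.card + JD2.card = JD.card := Finset.card_filter_add_card_filter_not _
    -- fibers over JD2 have exactly two elements
    have hJD2fib : ∀ j ∈ JD2, (C.filter (fun x => ℓ x = j)).card = 2 := by
      intro j hj
      rw [hJD2def, Finset.mem_filter] at hj
      have h1 := Finset.card_pos.2 (hfibne j (hJDJ hj.1))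
      have h2 := hfib2 j
      omega
    -- counting C by fibers
    have hCsum : ∑ j ∈ J, (C.filter (fun x => ℓ x = j)).card = C.card :=
      (Finset.card_eq_sum_card_fiberwise (fun x hx => Finset.mem_image_of_mem ℓ hx)).symm
    have hJDsum : ∑ j ∈ JD, (C.filter (fun x => ℓ x = j)).card ≤ C.card := by
      rw [← hCsum]
      exact Finset.sum_le_sum_of_subset hJDJ
    have hJDsum2 : JD1.card + 2 * JD2.card ≤ C.card := by
      have hsum : ∑ j ∈ JD, (C.filter (fun x => ℓ x = j)).card
          = ∑ j ∈ JD1, (C.filter (fun x => ℓ x = j)).card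
            + ∑ j ∈ JD2, (C.filter (fun x => ℓ x = j)).card := by
        rw [hJD1def, hJD2def]
        exact (Finset.sum_filter_add_sum_filter_not _ _ _).symm
      have h1 : ∑ j ∈ JD1, (C.filter (fun x => ℓ x = j)).card = JD1.card := by
        rw [Finset.sum_congr rfl (fun j hj => (Finset.mem_filter.1 hj).2), Finset.sum_const,
          smul_eq_mul, mul_one]
      have h2 : ∑ j ∈ JD2, (C.filter (fun x => ℓ x = j)).card = 2 * JD2.card := by
        rw [Finset.sum_congr rfl (fun j hj => hJD2fib j hj), Finset.sum_const, smul_eq_mul,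
          mul_comm]
      omega
    -- points over JD1 are in Y ∩ D
    have hsurj : ∀ j ∈ JD1, ∃ y ∈ Y ∩ D, ℓ y = j := by
      intro j hj
      rw [hJD1def, Finset.mem_filter] at hj
      obtain ⟨hj1, hj2⟩ := hj
      rw [hJDdef, Finset.mem_image] at hj1
      obtain ⟨y, hy, rfl⟩ := hj1
      refine ⟨y, Finset.mem_inter.2 ⟨?_, hy⟩, rfl⟩
      -- y = the unique fiber point, which is in C ⊆ Y
      obtain ⟨x, hx⟩ := Finset.card_eq_one.1 hj2
      have hxmem : x ∈ C.filter (fun x => ℓ x = ℓ y) := by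
        rw [hx]; exact Finset.mem_singleton_self x
      have hxC : x ∈ C := (Finset.mem_filter.1 hxmem).1
      have hxl : ℓ x = ℓ y := (Finset.mem_filter.1 hxmem).2
      -- w (ℓ y) = g x • x.rep, so y = mk (w (ℓ y)) = x
      obtain ⟨j', hj', hy'⟩ := hD0mem y (hDD0 hy)
      have hjy : j' = ℓ y := by rw [hy', hℓmk j' hj']
      subst hjy
      have hwx : w (ℓ y) = g x • x.rep := by
        rw [hwdef (ℓ y)]
        simp only [hx, Finset.sum_singleton]
      have : y = x := by
        rw [hy']
        have hne : g x • x.rep ≠ 0 := smul_ne_zero (hgne x hxC) x.rep_nonzero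
        have h1 : Projectivization.mk F (w (ℓ y)) (hwne _ hj') =
            Projectivization.mk F (g x • x.rep) hne := by
          congr 1
        rw [h1]
        have h2 : Projectivization.mk F (g x • x.rep) hne
            = Projectivization.mk F x.rep x.rep_nonzero := by
          rw [Projectivization.mk_eq_mk_iff']
          exact ⟨g x, rfl⟩
        rw [h2, Projectivization.mk_rep]
      rw [this]
      exact hCY hxC
    have hJD1card : JD1.card ≤ (Y ∩ D).card := by
      apply Finset.card_le_card_of_surjOn ℓ
      intro j hj
      obtain ⟨y, hy, hyj⟩ := hsurj j hj
      exact ⟨y, hy, hyj⟩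
    omega
end
end

section
/- Fix a subset R ⊆ {1,…,m} with |R| = u. If 2u ≤ k, then there is no crossing circuit D ⊆ Ω with range(D) = R. If k + 1 ≤ 2u and u ≤ k, then the number of crossing circuits D ⊆ Ω with range(D) = R is at most (q+1)^{2u−k−1}. -/
open scoped Classical
noncomputable section

variable {F : Type} [Field F]

/-! A crossing circuit with range `R` has exactly one point `[a_i P_i + b_i Q_i]` on each line
`L_i`, `i ∈ R`, and by minimality its relation `∑ g_i (a_i P_i + b_i Q_i) = 0` has all `g_i ≠ 0`.
Hence `(g_i a_i, g_i b_i)_{i ∈ R}` is a nonzero vector of the kernel `W` of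
`c ↦ ∑_{i ∈ R} (c_i.1 P_i + c_i.2 Q_i)`, determining the circuit up to scaling. By general
position this map is injective if `2u ≤ k`, so there is no such circuit, and surjective if
`k ≤ 2u`, so `dim W = 2u - k` and the circuits inject into `ℙ(W)`, which has
`1 + q + ⋯ + q^(2u-k-1) ≤ (q+1)^(2u-k-1)` points. -/

open Function Module Submodule
open scoped LinearAlgebra.Projectivization

lemma pspan_eq_span_range {k : ℕ} (T : Set (Pt F k)) :
    pspan T = span F (Set.range fun x : T => (x : Pt F k).rep) := by
  rw [← Set.image_eq_range, Set.image_eq_iUnion, span_iUnion₂]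
  exact iSup_congr fun x => iSup_congr fun _ => x.submodule_eq

lemma dep_iff_not_linearIndepOn {k : ℕ} (T : Finset (Pt F k)) :
    Dep T ↔ ¬ LinearIndepOn F Projectivization.rep (T : Set (Pt F k)) := by
  rw [Dep, pspan_eq_span_range, LinearIndepOn, linearIndependent_iff_card_le_finrank_span,
    not_le, Nat.lt_iff_add_one_le, Set.finrank]
  simp only [Finset.coe_sort_coe, Fintype.card_coe]

lemma IsCircuit.nonempty {k : ℕ} {D : Finset (Pt F k)} (hD : IsCircuit D) : D.Nonempty := by
  rw [Finset.nonempty_iff_ne_empty]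
  rintro rfl
  simpa [Dep] using hD.1

lemma IsCircuit.exists_relation {k : ℕ} {D : Finset (Pt F k)} (hD : IsCircuit D) :
    ∃ g : Pt F k → F, ∑ x ∈ D, g x • x.rep = 0 ∧ ∀ x ∈ D, g x ≠ 0 := by
  obtain ⟨g, hg, x₀, hx₀D, hx₀⟩ :
      ∃ g : Pt F k → F, ∑ x ∈ D, g x • x.rep = 0 ∧ ∃ x ∈ D, g x ≠ 0 := by
    simpa [linearIndepOn_finset_iff] using (dep_iff_not_linearIndepOn D).1 hD.1
  refine ⟨g, hg, fun x hx hgx => ?_⟩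
  -- otherwise the support of `g` is a smaller dependent set
  refine hD.2 (D.filter (g · ≠ 0)) (Finset.filter_ssubset.2 ⟨x, hx, by simpa using hgx⟩) ?_
  rw [dep_iff_not_linearIndepOn, linearIndepOn_finset_iff]
  refine fun h => hx₀ (h g ?_ x₀ (Finset.mem_filter.2 ⟨hx₀D, hx₀⟩))
  rwa [Finset.sum_filter_of_ne fun y _ hy => left_ne_zero_of_smul hy]

section Pencil

variable {ι V : Type*} [AddCommGroup V] [Module F V]

def pencil (P Q : ι → V) (c : ι → F × F) (i : ι) : V := (c i).1 • P i + (c i).2 • Q i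

variable {P Q : ι → V}

lemma eq_zero_of_sum_pencil_eq_zero {S : Finset ι}
    (hPQ : LinearIndepOn F (Sum.elim P Q) (S.disjSum S : Set (ι ⊕ ι))) {c : ι → F × F}
    (h : ∑ i ∈ S, pencil P Q c i = 0) : ∀ i ∈ S, c i = 0 := by
  have hc := linearIndepOn_finset_iff.1 hPQ (Sum.elim (fun i => (c i).1) (fun i => (c i).2))
    (by simpa [Finset.sum_disjSum, pencil, Finset.sum_add_distrib] using h)
  exact fun i hi => Prod.ext (hc (.inl i) (by simpa)) (hc (.inr i) (by simpa))

lemma disjoint_span_pair {i j : ι} (hij : i ≠ j)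
    (hPQ : LinearIndepOn F (Sum.elim P Q) (({i, j} : Finset ι).disjSum {i, j} : Set (ι ⊕ ι))) :
    Disjoint (span F {P i, Q i}) (span F {P j, Q j}) := by
  refine disjoint_def.2 fun v hvi hvj => ?_
  obtain ⟨a, b, rfl⟩ := mem_span_pair.1 hvi
  obtain ⟨a', b', hv⟩ := mem_span_pair.1 hvj
  have := eq_zero_of_sum_pencil_eq_zero hPQ (c := fun l => if l = i then (a, b) else (-a', -b'))
    (by simp [Finset.sum_pair hij, pencil, hij.symm, ← hv]; abel)
  obtain ⟨rfl, rfl⟩ : a = 0 ∧ b = 0 := by simpa using this i (by simp)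
  simp

variable [Fintype ι]

variable (F) in
def pencilSum (P Q : ι → V) : (ι → F × F) →ₗ[F] V :=
  ∑ i, ((LinearMap.fst F F F).smulRight (P i) + (LinearMap.snd F F F).smulRight (Q i)) ∘ₗ
    LinearMap.proj i

lemma pencilSum_apply (c : ι → F × F) : pencilSum F P Q c = ∑ i, pencil P Q c i := by
  simp [pencilSum, pencil]

lemma pencilSum_single (i : ι) (p : F × F) :
    pencilSum F P Q (Pi.single i p) = p.1 • P i + p.2 • Q i := by
  rw [pencilSum_apply, Fintype.sum_eq_single i fun j hj => by simp [pencil, hj]]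
  simp [pencil]

lemma range_pencilSum_eq_top (h : span F (Set.range P ∪ Set.range Q) = ⊤) :
    LinearMap.range (pencilSum F P Q) = ⊤ := by
  rw [eq_top_iff, ← h, span_le]
  rintro _ (⟨i, rfl⟩ | ⟨i, rfl⟩)
  · exact ⟨Pi.single i (1, 0), by simp [pencilSum_single]⟩
  · exact ⟨Pi.single i (0, 1), by simp [pencilSum_single]⟩

lemma finrank_ker_pencilSum [FiniteDimensional F V]
    (h : span F (Set.range P ∪ Set.range Q) = ⊤) :
    finrank F (LinearMap.ker (pencilSum F P Q)) = 2 * Fintype.card ι - finrank F V := by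
  have := LinearMap.finrank_range_add_finrank_ker (pencilSum F P Q)
  rw [range_pencilSum_eq_top h, finrank_top] at this
  simp only [finrank_pi_fintype, finrank_prod, finrank_self, Finset.sum_const,
    Finset.card_univ, smul_eq_mul] at this
  omega

end Pencil

section GeneralPosition

variable {κ ι V : Type*} [AddCommGroup V] [Module F V]

variable (F) in
def InGeneralPosition (v : κ → V) : Prop :=
  ∀ T : Finset κ, T.card ≤ finrank F V → LinearIndepOn F v (T : Set κ)

lemma InGeneralPosition.span_image_eq_top [FiniteDimensional F V] {v : κ → V}
    (hv : InGeneralPosition F v) {S : Finset κ} (hS : finrank F V ≤ S.card) :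
    span F (v '' S) = ⊤ := by
  obtain ⟨T, hTS, hT⟩ := Finset.exists_subset_card_eq hS
  refine eq_top_mono (span_mono (Set.image_mono hTS)) ?_
  rw [Set.image_eq_range]
  exact (hv T hT.le).span_eq_top_of_card_eq_finrank' (by simpa using hT)

variable {P Q : ι → V}

lemma InGeneralPosition.pairwise_disjoint_span_pair (hPQ : InGeneralPosition F (Sum.elim P Q))
    (h4 : 4 ≤ finrank F V) : Pairwise (Disjoint on fun i => span F {P i, Q i}) := by
  intro i j hij
  refine disjoint_span_pair hij (hPQ _ ?_)
  rw [Finset.card_disjSum, Finset.card_pair hij]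
  omega

lemma InGeneralPosition.finrank_ker_pencilSum [FiniteDimensional F V]
    (hPQ : InGeneralPosition F (Sum.elim P Q)) {R : Finset ι} (hR : finrank F V ≤ 2 * R.card) :
    finrank F (LinearMap.ker (pencilSum F (fun i : R => P i) (fun i : R => Q i)))
      = 2 * R.card - finrank F V := by
  rw [_root_.finrank_ker_pencilSum, Fintype.card_coe]
  refine eq_top_mono (span_mono ?_)
    (hPQ.span_image_eq_top (S := R.disjSum R) (by rw [Finset.card_disjSum]; omega))
  rintro _ ⟨i | i, hi, rfl⟩
  · exact .inl ⟨⟨i, by simpa using hi⟩, rfl⟩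
  · exact .inr ⟨⟨i, by simpa using hi⟩, rfl⟩

end GeneralPosition

section CrossingCircuit

variable {m k : ℕ} {P Q : Fin m → Fin k → F} {L : Fin m → Submodule F (Fin k → F)}
  {D : Finset (Pt F k)} {R : Finset (Fin m)}

theorem CrossingCircuit.exists_pencil_relation (hL : ∀ i, L i = span F {P i, Q i})
    (hdisj : Pairwise (Disjoint on L)) (hD : CrossingCircuit L D)
    (hR : ∀ i, i ∈ R ↔ ∃ x ∈ D, x.submodule ≤ L i) :
    ∃ c : Fin m → F × F, ∑ i ∈ R, pencil P Q c i = 0 ∧ (∀ i ∈ R, pencil P Q c i ≠ 0) ∧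
      ∀ x, x ∈ D ↔ ∃ i ∈ R, x.submodule = F ∙ pencil P Q c i := by
  obtain ⟨g, hg, hg0⟩ := hD.1.exists_relation
  have rep_mem {x : Pt F k} {i : Fin m} (h : x.submodule ≤ L i) : x.rep ∈ L i :=
    h (x.submodule_eq ▸ mem_span_singleton_self _)
  have line_unique {x : Pt F k} {i j : Fin m} (hi : x.submodule ≤ L i) (hj : x.submodule ≤ L j) :
      i = j :=
    by_contra fun hij => x.rep_nonzero (disjoint_def.1 (hdisj hij) _ (rep_mem hi) (rep_mem hj))
  have point_unique {x y : Pt F k} {i : Fin m} (hx : x ∈ D) (hy : y ∈ D)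
      (hxi : x.submodule ≤ L i) (hyi : y.submodule ≤ L i) : x = y :=
    Finset.card_le_one.1 (hD.2.2 i) x (Finset.mem_filter.2 ⟨hx, hxi⟩) y
      (Finset.mem_filter.2 ⟨hy, hyi⟩)
  -- `c i` will be the coefficients of `g x • x.rep` for the point `x` of `D` on `L i`, if any
  have : ∀ i, ∃ p : F × F, ∀ x ∈ D, x.submodule ≤ L i → p.1 • P i + p.2 • Q i = g x • x.rep := by
    intro i
    by_cases h : ∃ x ∈ D, x.submodule ≤ L i
    · obtain ⟨x, hx, hxi⟩ := h
      obtain ⟨a, b, hab⟩ := mem_span_pair.1 (hL i ▸ rep_mem hxi)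
      refine ⟨g x • (a, b), fun y hy hyi => ?_⟩
      rw [point_unique hy hx hyi hxi, ← hab]
      simp [smul_add, smul_smul]
    · exact ⟨0, fun x hx hxi => (h ⟨x, hx, hxi⟩).elim⟩
  choose c hc using this
  replace hc : ∀ i, ∀ x ∈ D, x.submodule ≤ L i → pencil P Q c i = g x • x.rep := hc
  have hpoint {i : Fin m} (hi : i ∈ R) :
      ∃ x ∈ D, x.submodule ≤ L i ∧ pencil P Q c i = g x • x.rep :=
    let ⟨x, hx, hxi⟩ := (hR i).1 hi
    ⟨x, hx, hxi, hc i x hx hxi⟩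
  refine ⟨c, ?_, fun i hi => ?_, fun x => ⟨fun hx => ?_, ?_⟩⟩
  · rw [← hg]
    symm
    refine Finset.sum_bij (fun x hx => (hD.2.1 x hx).choose)
      (fun x hx => (hR _).2 ⟨x, hx, (hD.2.1 x hx).choose_spec⟩)
      (fun x hx y hy hxy => point_unique hx hy (hD.2.1 x hx).choose_spec
        (hxy ▸ (hD.2.1 y hy).choose_spec)) (fun i hi => ?_)
      (fun x hx => (hc _ x hx (hD.2.1 x hx).choose_spec).symm)
    obtain ⟨x, hx, hxi⟩ := (hR i).1 hi
    exact ⟨x, hx, line_unique (hD.2.1 x hx).choose_spec hxi⟩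
  · obtain ⟨x, hx, -, hcx⟩ := hpoint hi
    rw [hcx]
    exact smul_ne_zero (hg0 x hx) x.rep_nonzero
  · obtain ⟨i, hxi⟩ := hD.2.1 x hx
    refine ⟨i, (hR i).2 ⟨x, hx, hxi⟩, ?_⟩
    rw [hc i x hx hxi, span_singleton_smul_eq (hg0 x hx).isUnit, x.submodule_eq]
  · rintro ⟨i, hi, hx⟩
    obtain ⟨y, hy, -, hcy⟩ := hpoint hi
    rw [hcy, span_singleton_smul_eq (hg0 y hy).isUnit, ← y.submodule_eq] at hx
    exact Projectivization.submodule_injective hx ▸ hy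

theorem CrossingCircuit.not_linearIndepOn_range (hL : ∀ i, L i = span F {P i, Q i})
    (hdisj : Pairwise (Disjoint on L)) (hD : CrossingCircuit L D)
    (hR : ∀ i, i ∈ R ↔ ∃ x ∈ D, x.submodule ≤ L i) :
    ¬ LinearIndepOn F (Sum.elim P Q) (R.disjSum R : Set (Fin m ⊕ Fin m)) := by
  intro hPQ
  obtain ⟨c, hc, hc0, hDc⟩ := hD.exists_pencil_relation hL hdisj hR
  obtain ⟨x, hx⟩ := hD.1.nonempty
  obtain ⟨i, hi, -⟩ := (hDc x).1 hx
  exact hc0 i hi (by simp [pencil, eq_zero_of_sum_pencil_eq_zero hPQ hc i hi])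

theorem ncard_crossingCircuit_le_card_projectivization [Finite F]
    (hL : ∀ i, L i = span F {P i, Q i}) (hdisj : Pairwise (Disjoint on L)) (R : Finset (Fin m)) :
    {D : Finset (Pt F k) | CrossingCircuit L D ∧ ∀ i, i ∈ R ↔ ∃ x ∈ D, x.submodule ≤ L i}.ncard
      ≤ Nat.card (ℙ F (LinearMap.ker (pencilSum F (fun i : R => P i) (fun i : R => Q i)))) := by
  set W := LinearMap.ker (pencilSum F (fun i : R => P i) (fun i : R => Q i))
  set S := {D : Finset (Pt F k) | CrossingCircuit L D ∧ ∀ i, i ∈ R ↔ ∃ x ∈ D, x.submodule ≤ L i}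
  -- a crossing circuit is recovered from the line through its relation vector in `W`
  have key : ∀ D ∈ S, ∃ w : ℙ F W, ∀ x, x ∈ D ↔ ∃ i : R,
      x.submodule = F ∙ pencil (fun i : R => P i) (fun i : R => Q i) (w.rep : R → F × F) i := by
    rintro D ⟨hD, hR⟩
    obtain ⟨c, hc, hc0, hDc⟩ := hD.exists_pencil_relation hL hdisj hR
    have hcW : (fun i : R => c i) ∈ W := by
      rw [LinearMap.mem_ker, pencilSum_apply, ← hc, ← Finset.sum_coe_sort R]
      rfl
    obtain ⟨x, hx⟩ := hD.1.nonempty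
    obtain ⟨i₀, hi₀, -⟩ := (hDc x).1 hx
    have hc_ne : (⟨_, hcW⟩ : W) ≠ 0 := fun h =>
      have : c i₀ = 0 := congr_fun (congr_arg Subtype.val h) ⟨i₀, hi₀⟩
      hc0 i₀ hi₀ (by simp [pencil, this])
    obtain ⟨a, ha⟩ := Projectivization.exists_smul_eq_mk_rep F _ hc_ne
    refine ⟨.mk F _ hc_ne, fun x => (hDc x).trans ?_⟩
    rw [← ha]
    simp [pencil, ← smul_add, span_singleton_group_smul_eq, Subtype.exists]
  choose w hw using key
  calc S.ncard = Nat.card S := (Nat.card_coe_set_eq S).symm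
    _ ≤ Nat.card (ℙ F W) := Nat.card_le_card_of_injective (fun D : S => w D D.2) fun D D' h =>
      Subtype.ext (Finset.ext fun x => by rw [hw D D.2, hw D' D'.2]; simp only [h])

end CrossingCircuit

theorem Nat.geom_sum_le_succ_pow (q : ℕ) :
    ∀ n : ℕ, ∑ j ∈ Finset.range n, q ^ j ≤ (q + 1) ^ (n - 1)
  | 0 => by simp
  | 1 => by simp
  | n + 2 => calc
    ∑ j ∈ Finset.range (n + 2), q ^ j = q * ∑ j ∈ Finset.range (n + 1), q ^ j + 1 := by
      simp [Finset.sum_range_succ' _ (n + 1), Finset.mul_sum, pow_succ, mul_comm]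
    _ ≤ q * (q + 1) ^ n + 1 := by gcongr; exact Nat.geom_sum_le_succ_pow q (n + 1)
    _ ≤ (q + 1) ^ (n + 1) := by
      rw [pow_succ]
      nlinarith [Nat.one_le_pow n (q + 1) q.succ_pos]

theorem statement11_general [Fintype F] {m k : ℕ} (hk4 : 4 ≤ k)
    (P Q : Fin m → (Fin k → F))
    (hgen : ∀ T : Finset (Fin m ⊕ Fin m), T.card ≤ k →
      LinearIndependent F (fun t : {x // x ∈ T} => Sum.elim P Q (t : Fin m ⊕ Fin m)))
    (L : Fin m → Submodule F (Fin k → F))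
    (hL : ∀ i, L i = Submodule.span F {P i, Q i})
    (R : Finset (Fin m)) (u : ℕ) (hu : R.card = u) :
    (2 * u ≤ k → ¬ ∃ D : Finset (Pt F k), CrossingCircuit L D ∧
        (∀ i, i ∈ R ↔ ∃ x ∈ D, x.submodule ≤ L i)) ∧
    (k + 1 ≤ 2 * u → u ≤ k →
      {D : Finset (Pt F k) | CrossingCircuit L D ∧
          (∀ i, i ∈ R ↔ ∃ x ∈ D, x.submodule ≤ L i)}.ncard
        ≤ (Fintype.card F + 1) ^ (2 * u - k - 1)) := by
  have hPQ : InGeneralPosition F (Sum.elim P Q) := fun T hT => hgen T (by simpa using hT)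
  have hdisj : Pairwise (Disjoint on L) := by
    simpa only [← hL] using hPQ.pairwise_disjoint_span_pair (by simpa using hk4)
  subst hu
  refine ⟨fun h2u ⟨D, hD, hR⟩ => hD.not_linearIndepOn_range hL hdisj hR (hPQ _ ?_), fun hk1 _ => ?_⟩
  · rw [Finset.card_disjSum, finrank_fin_fun]
    omega
  calc _ ≤ _ := ncard_crossingCircuit_le_card_projectivization hL hdisj R
    _ = ∑ j ∈ Finset.range (2 * R.card - k), Fintype.card F ^ j := by
      have hW := hPQ.finrank_ker_pencilSum (R := R) (by rw [finrank_fin_fun]; omega)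
      rw [Projectivization.card_of_finrank F _ hW, Nat.card_eq_fintype_card, finrank_fin_fun]
    _ ≤ _ := Nat.geom_sum_le_succ_pow _ _

/-- for a fixed set `R` of `u` lines, if `2u ≤ k` there is no crossing
circuit with range `R`, and if `k + 1 ≤ 2u ≤ 2k` the number of crossing circuits with
range `R` is at most `(q+1)^(2u-k-1)`. -/
theorem statement11 [Fintype F] {m k : ℕ} (hm : 2 ≤ m) (hk4 : 4 ≤ k) (hkm : k + 1 ≤ 2 * m)
    (P Q : Fin m → (Fin k → F))
    (hgen : ∀ T : Finset (Fin m ⊕ Fin m), T.card ≤ k →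
      LinearIndependent F (fun t : {x // x ∈ T} => Sum.elim P Q (t : Fin m ⊕ Fin m)))
    (L : Fin m → Submodule F (Fin k → F))
    (hL : ∀ i, L i = Submodule.span F {P i, Q i})
    (R : Finset (Fin m)) (u : ℕ) (hu : R.card = u) :
    (2 * u ≤ k → ¬ ∃ D : Finset (Pt F k), CrossingCircuit L D ∧
        (∀ i, i ∈ R ↔ ∃ x ∈ D, x.submodule ≤ L i)) ∧
    (k + 1 ≤ 2 * u → u ≤ k →
      {D : Finset (Pt F k) | CrossingCircuit L D ∧
          (∀ i, i ∈ R ↔ ∃ x ∈ D, x.submodule ≤ L i)}.ncard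
        ≤ (Fintype.card F + 1) ^ (2 * u - k - 1)) :=
  statement11_general hk4 P Q hgen L hL R u hu
end
end
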